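/- arXiv:1105.2077 — 8 statements merged into one kernel-verified Lean document; each statement's English description precedes it below -/
import Mathlib

section
/- Let φ:[0,1]→Sp(1) be continuous with φ(0)=I and let (r,θ) be a continuous polar lift of φ, with associated function Δ. Then |Δ(s₂) − Δ(s₁)| < 1/2 for all s₁,s₂ ∈ [0,2π]; in particular the winding interval I(φ) = [inf Δ, sup Δ] is a closed interval of length strictly less than 1/2. -/
open Real Set Matrix

noncomputable section

/-- `e^{is}` viewed as the vector `(cos s, sin s)` in `ℝ²`. -/
def expVec (s : ℝ) : Fin 2 → ℝ := ![Real.cos s, Real.sin s]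

/-- `(r, θ)` is a polar lift of the path of matrices `φ` on `[0,1] × [0,2π]`:
`φ(t)·e^{is} = r(t,s)·e^{iθ(t,s)}` with `r > 0` and `θ(0,s) = s`. -/
def IsPolarLift (φ : ℝ → Matrix (Fin 2) (Fin 2) ℝ) (r θ : ℝ → ℝ → ℝ) : Prop :=
  (∀ t ∈ Icc (0:ℝ) 1, ∀ s ∈ Icc (0:ℝ) (2 * π),
      0 < r t s ∧ φ t *ᵥ expVec s = r t s • expVec (θ t s)) ∧
  ∀ s ∈ Icc (0:ℝ) (2 * π), θ 0 s = s

/-- The function `Δ(s) = (θ(1,s) - s)/(2π)` associated to a polar lift. -/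
def windingDelta (θ : ℝ → ℝ → ℝ) (s : ℝ) : ℝ := (θ 1 s - s) / (2 * π)

/-! A determinant-one matrix preserves oriented area, so if `φ t` carries `e^{is₁}, e^{is₂}` to
`r₁e^{iθ₁}, r₂e^{iθ₂}` then `r₁ r₂ sin (θ₂ - θ₁) = sin (s₂ - s₁)`. Hence the angle difference
`θ(t,s₂) - θ(t,s₁)` hits a multiple of `π` at some time iff it starts at one. Every interval of
length `π` contains either a multiple of `π` or, if it starts at one, a point where `sin ≠ 0`; so by
the intermediate value theorem the difference moves by less than `π` from its initial value
`s₂ - s₁`, which is `|Δ(s₂) - Δ(s₁)| < 1/2`. -/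

namespace Real

theorem exists_mem_Icc_add_pi_sin_eq_zero_iff_ne (x : ℝ) :
    ∃ c ∈ Icc x (x + π), (sin c = 0 ↔ sin x ≠ 0) := by
  by_cases hx : sin x = 0
  · have hcos : cos x ≠ 0 := fun hc => by nlinarith [sin_sq_add_cos_sq x]
    exact ⟨x + π / 2, ⟨by linarith [pi_pos], by linarith [pi_pos]⟩, by
      simpa [sin_add_pi_div_two, hx] using hcos⟩
  · refine ⟨⌈x / π⌉ * π, ⟨?_, ?_⟩, by simp [hx]⟩
    · simpa [div_le_iff₀ pi_pos] using Int.le_ceil (x / π)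
    · have h := mul_lt_mul_of_pos_right (Int.ceil_lt_add_one (x / π)) pi_pos
      rw [add_mul, div_mul_cancel₀ _ pi_ne_zero, one_mul] at h
      exact h.le

theorem sub_lt_pi_of_sin_eq_zero_iff {f : ℝ → ℝ} {a b : ℝ} (hab : a ≤ b)
    (hf : ContinuousOn f (Icc a b)) (hsin : ∀ t ∈ Icc a b, sin (f t) = 0 ↔ sin (f a) = 0) :
    f b - f a < π := by
  by_contra! hπ
  obtain ⟨c, hc, hc0⟩ := exists_mem_Icc_add_pi_sin_eq_zero_iff_ne (f a)
  obtain ⟨t, ht, rfl⟩ :=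
    intermediate_value_Icc hab hf ⟨hc.1, hc.2.trans (by linarith)⟩
  exact not_iff_self (hc0.symm.trans (hsin t ht))

theorem abs_sub_lt_pi_of_sin_eq_zero_iff {f : ℝ → ℝ} {a b : ℝ} (hab : a ≤ b)
    (hf : ContinuousOn f (Icc a b)) (hsin : ∀ t ∈ Icc a b, sin (f t) = 0 ↔ sin (f a) = 0) :
    |f b - f a| < π := by
  have hneg := sub_lt_pi_of_sin_eq_zero_iff (f := fun t => -f t) hab hf.neg
    (by simpa only [sin_neg, neg_eq_zero] using hsin)
  rw [abs_sub_lt_iff]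
  exact ⟨sub_lt_pi_of_sin_eq_zero_iff hab hf hsin, by linarith⟩

end Real

theorem mulVec_expVec_sin_sub {A : Matrix (Fin 2) (Fin 2) ℝ} {s₁ s₂ ρ₁ ρ₂ α₁ α₂ : ℝ}
    (h₁ : A *ᵥ expVec s₁ = ρ₁ • expVec α₁) (h₂ : A *ᵥ expVec s₂ = ρ₂ • expVec α₂) :
    ρ₁ * ρ₂ * sin (α₂ - α₁) = A.det * sin (s₂ - s₁) := by
  have e₁₀ := congrFun h₁ 0
  have e₁₁ := congrFun h₁ 1
  have e₂₀ := congrFun h₂ 0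
  have e₂₁ := congrFun h₂ 1
  simp only [expVec, mulVec, dotProduct, Fin.sum_univ_two, Pi.smul_apply, smul_eq_mul,
    cons_val_zero, cons_val_one] at e₁₀ e₁₁ e₂₀ e₂₁
  rw [det_fin_two, sin_sub, sin_sub]
  linear_combination (-(A 0 0 * cos s₁ + A 0 1 * sin s₁)) * e₂₁ - (ρ₂ * sin α₂) * e₁₀
    + (A 1 0 * cos s₁ + A 1 1 * sin s₁) * e₂₀ + (ρ₂ * cos α₂) * e₁₁

namespace IsPolarLift

variable {φ : ℝ → Matrix (Fin 2) (Fin 2) ℝ} {r θ : ℝ → ℝ → ℝ}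

theorem sin_sub_eq_zero_iff (hlift : IsPolarLift φ r θ) {t s₁ s₂ : ℝ} (ht : t ∈ Icc (0:ℝ) 1)
    (hdet : (φ t).det ≠ 0)
    (hs₁ : s₁ ∈ Icc (0:ℝ) (2 * π)) (hs₂ : s₂ ∈ Icc (0:ℝ) (2 * π)) :
    sin (θ t s₂ - θ t s₁) = 0 ↔ sin (s₂ - s₁) = 0 := by
  obtain ⟨hr₁, h₁⟩ := hlift.1 t ht s₁ hs₁
  obtain ⟨hr₂, h₂⟩ := hlift.1 t ht s₂ hs₂
  rw [← mul_eq_zero_iff_left (mul_pos hr₁ hr₂).ne', mulVec_expVec_sin_sub h₁ h₂,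
    mul_eq_zero_iff_left hdet]

theorem abs_windingDelta_sub_lt_half (hlift : IsPolarLift φ r θ)
    (hdet : ∀ t ∈ Icc (0:ℝ) 1, (φ t).det ≠ 0)
    (hθ : ContinuousOn (fun p : ℝ × ℝ => θ p.1 p.2) (Icc (0:ℝ) 1 ×ˢ Icc (0:ℝ) (2 * π)))
    {s₁ s₂ : ℝ} (hs₁ : s₁ ∈ Icc (0:ℝ) (2 * π)) (hs₂ : s₂ ∈ Icc (0:ℝ) (2 * π)) :
    |windingDelta θ s₂ - windingDelta θ s₁| < 1 / 2 := by
  have hslice : ∀ s ∈ Icc (0:ℝ) (2 * π), ContinuousOn (fun t => θ t s) (Icc (0:ℝ) 1) :=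
    fun s hs => hθ.comp (Continuous.prodMk_left s).continuousOn fun t ht => ⟨ht, hs⟩
  have hθ₀ : θ 0 s₂ - θ 0 s₁ = s₂ - s₁ := by rw [hlift.2 s₁ hs₁, hlift.2 s₂ hs₂]
  have hangle : |(θ 1 s₂ - θ 1 s₁) - (θ 0 s₂ - θ 0 s₁)| < π :=
    Real.abs_sub_lt_pi_of_sin_eq_zero_iff (f := fun t => θ t s₂ - θ t s₁) zero_le_one
      ((hslice s₂ hs₂).sub (hslice s₁ hs₁))
      fun t ht => by rw [hθ₀]; exact hlift.sin_sub_eq_zero_iff ht (hdet t ht) hs₁ hs₂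
  have h2π : 0 < 2 * π := by positivity
  rw [hθ₀] at hangle
  calc |windingDelta θ s₂ - windingDelta θ s₁|
      = |(θ 1 s₂ - θ 1 s₁) - (s₂ - s₁)| / (2 * π) := by
        rw [windingDelta, windingDelta, ← sub_div, abs_div, abs_of_pos h2π]; ring_nf
    _ < π / (2 * π) := by gcongr
    _ = 1 / 2 := by field_simp

end IsPolarLift

theorem IsCompact.sSup_image_sub_sInf_image_lt {α : Type*} [TopologicalSpace α] {g : α → ℝ}
    {s : Set α} {c : ℝ} (hs : IsCompact s) (hne : s.Nonempty) (hg : ContinuousOn g s)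
    (h : ∀ x ∈ s, ∀ y ∈ s, |g y - g x| < c) :
    sSup (g '' s) - sInf (g '' s) < c := by
  have hK := hs.image_of_continuousOn hg
  obtain ⟨y, hy, hsup⟩ := hK.sSup_mem (hne.image g)
  obtain ⟨x, hx, hinf⟩ := hK.sInf_mem (hne.image g)
  rw [← hsup, ← hinf]
  exact (le_abs_self _).trans_lt (h x hx y hy)

theorem winding_interval_length_lt_half_general
    (φ : ℝ → Matrix (Fin 2) (Fin 2) ℝ)
    (hφdet : ∀ t ∈ Icc (0:ℝ) 1, (φ t).det = 1)
    (r θ : ℝ → ℝ → ℝ)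
    (hθcont : ContinuousOn (fun p : ℝ × ℝ => θ p.1 p.2) (Icc (0:ℝ) 1 ×ˢ Icc (0:ℝ) (2 * π)))
    (hlift : IsPolarLift φ r θ) :
    (∀ s₁ ∈ Icc (0:ℝ) (2 * π), ∀ s₂ ∈ Icc (0:ℝ) (2 * π),
      |windingDelta θ s₂ - windingDelta θ s₁| < 1 / 2) ∧
    sSup (windingDelta θ '' Icc (0:ℝ) (2 * π)) -
      sInf (windingDelta θ '' Icc (0:ℝ) (2 * π)) < 1 / 2 := by
  have hdiff : ∀ s₁ ∈ Icc (0:ℝ) (2 * π), ∀ s₂ ∈ Icc (0:ℝ) (2 * π),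
      |windingDelta θ s₂ - windingDelta θ s₁| < 1 / 2 :=
    fun _ hs₁ _ hs₂ => hlift.abs_windingDelta_sub_lt_half
      (fun t ht => by simp [hφdet t ht]) hθcont hs₁ hs₂
  have hcont : ContinuousOn (windingDelta θ) (Icc (0:ℝ) (2 * π)) :=
    ((hθcont.comp (Continuous.prodMk_right 1).continuousOn
      fun _ hs => ⟨⟨zero_le_one, le_rfl⟩, hs⟩).sub continuousOn_id).div_const _
  exact ⟨hdiff, isCompact_Icc.sSup_image_sub_sInf_image_lt
    (nonempty_Icc.2 (by positivity)) hcont hdiff⟩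

/-- For a continuous polar lift of a continuous path `φ : [0,1] → Sp(1)` with `φ(0)=I`,
`|Δ(s₂) - Δ(s₁)| < 1/2` for all `s₁, s₂ ∈ [0, 2π]`; in particular the winding interval
`I(φ) = [inf Δ, sup Δ]` has length strictly less than `1/2`. -/
theorem winding_interval_length_lt_half
    (φ : ℝ → Matrix (Fin 2) (Fin 2) ℝ)
    (hφcont : ∀ i j, ContinuousOn (fun t => φ t i j) (Icc (0:ℝ) 1))
    (hφdet : ∀ t ∈ Icc (0:ℝ) 1, (φ t).det = 1)
    (hφ0 : φ 0 = 1)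
    (r θ : ℝ → ℝ → ℝ)
    (hrcont : ContinuousOn (fun p : ℝ × ℝ => r p.1 p.2) (Icc (0:ℝ) 1 ×ˢ Icc (0:ℝ) (2 * π)))
    (hθcont : ContinuousOn (fun p : ℝ × ℝ => θ p.1 p.2) (Icc (0:ℝ) 1 ×ˢ Icc (0:ℝ) (2 * π)))
    (hlift : IsPolarLift φ r θ) :
    (∀ s₁ ∈ Icc (0:ℝ) (2 * π), ∀ s₂ ∈ Icc (0:ℝ) (2 * π),
      |windingDelta θ s₂ - windingDelta θ s₁| < 1 / 2) ∧
    sSup (windingDelta θ '' Icc (0:ℝ) (2 * π)) -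
      sInf (windingDelta θ '' Icc (0:ℝ) (2 * π)) < 1 / 2 :=
  winding_interval_length_lt_half_general φ hφdet r θ hθcont hlift
end
end

section
/- Let φ:[0,1]→Sp(1) be smooth with φ(0)=I and let (r,θ) be a smooth polar lift of φ, with associated function Δ. Then inf Δ ∈ ℤ or sup Δ ∈ ℤ if and only if det(φ(1) − I) = 0, i.e. if and only if 1 is an eigenvalue of φ(1). -/
set_option maxHeartbeats 1000000

open Real Set Matrix

noncomputable section

/-- Any point on the unit circle is `(cos s, sin s)` for some `s ∈ [0, 2π]`. -/
lemma aux_exists_angle (x y : ℝ) (h : x ^ 2 + y ^ 2 = 1) :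
    ∃ s ∈ Icc (0:ℝ) (2 * π), Real.cos s = x ∧ Real.sin s = y := by
  set z : ℂ := ⟨x, y⟩ with hz
  have habs : ‖z‖ = 1 := by
    rw [Complex.norm_def, Complex.normSq_mk]
    rw [show x * x + y * y = 1 by nlinarith]
    exact Real.sqrt_one
  have hz0 : z ≠ 0 := by
    intro h0
    rw [h0] at habs
    simp at habs
  have hc : Real.cos z.arg = x := by
    rw [Complex.cos_arg hz0, habs]
    simp [hz]
  have hs : Real.sin z.arg = y := by
    rw [Complex.sin_arg, habs]
    simp [hz]
  have harg := Complex.arg_mem_Ioc z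
  rcases le_or_gt 0 z.arg with h0 | h0
  · refine ⟨z.arg, ⟨h0, ?_⟩, hc, hs⟩
    have := harg.2
    nlinarith [Real.pi_pos]
  · refine ⟨z.arg + 2 * π, ⟨?_, ?_⟩, ?_, ?_⟩
    · have := harg.1; linarith
    · have := harg.2; nlinarith [Real.pi_pos]
    · rw [Real.cos_add_two_pi]; exact hc
    · rw [Real.sin_add_two_pi]; exact hs

/-- If cosines and sines agree, the angles differ by an integer multiple of `2π`. -/
lemma aux_int_diff (x y : ℝ) (hc : Real.cos x = Real.cos y) (hs : Real.sin x = Real.sin y) :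
    ∃ k : ℤ, x = y + 2 * π * k := by
  have h := Real.Angle.cos_sin_inj (θ := x) (ψ := y) hc hs
  rw [Real.Angle.angle_eq_iff_two_pi_dvd_sub] at h
  obtain ⟨k, hk⟩ := h
  exact ⟨k, by linarith⟩

/-- A binary quadratic form `c X² - 2a XY - b Y²` with `a² + bc = 0` is semidefinite. -/
lemma aux_semidef (a b c : ℝ) (h : a ^ 2 + b * c = 0) :
    (∀ X Y : ℝ, 0 ≤ c * X ^ 2 - 2 * a * X * Y - b * Y ^ 2) ∨
    (∀ X Y : ℝ, c * X ^ 2 - 2 * a * X * Y - b * Y ^ 2 ≤ 0) := by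
  rcases lt_trichotomy c 0 with hc | hc | hc
  · right; intro X Y; nlinarith [sq_nonneg (c * X - a * Y)]
  · subst hc
    have ha : a = 0 := by nlinarith [sq_nonneg a]
    subst ha
    rcases le_or_gt b 0 with hb | hb
    · left; intro X Y; nlinarith [sq_nonneg Y]
    · right; intro X Y; nlinarith [sq_nonneg Y]
  · left; intro X Y; nlinarith [sq_nonneg (c * X - a * Y)]

/-- Key identity: behavior of the "defect" quadratic form `q` near an eigendirection. -/
lemma aux_key_identity (c s P S ρ A00 A01 A10 A11 : ℝ)
    (h1 : c ^ 2 + s ^ 2 = 1) (h2 : A00 * A11 - A01 * A10 = 1)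
    (h3 : A00 * c + A01 * s = ρ * c) (h4 : A10 * c + A11 * s = ρ * s) :
    ρ * ((c * P - s * S) * (A10 * (c * P - s * S) + A11 * (s * P + c * S)) -
         (s * P + c * S) * (A00 * (c * P - s * S) + A01 * (s * P + c * S)))
      = S * ((1 - ρ ^ 2) * P
          - ρ * (c * (A01 * c - A00 * s) + s * (A11 * c - A10 * s)) * S) := by
  linear_combination (S * P * (A00 * A11 - A01 * A10) - P * ρ ^ 2 * S) * h1 + (S * P) * h2 +
    (-(S * P * (A11 * c - A10 * s)) - ρ * P * (s * P + c * S)) * h3 +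
    (S * P * (A01 * c - A00 * s) + ρ * P * (c * P - s * S)) * h4

/-- For a smooth polar lift of a smooth path `φ : [0,1] → Sp(1)` with `φ(0)=I`,
an endpoint of the winding interval `I(φ) = [inf Δ, sup Δ]` is an integer if and only if
`det(φ(1) - I) = 0`, i.e. iff `1` is an eigenvalue of `φ(1)`. -/
theorem winding_interval_endpoint_integer_iff_degenerate
    (φ : ℝ → Matrix (Fin 2) (Fin 2) ℝ)
    (hφsmooth : ∀ i j, ContDiffOn ℝ (⊤ : ℕ∞) (fun t => φ t i j) (Icc (0:ℝ) 1))
    (hφdet : ∀ t ∈ Icc (0:ℝ) 1, (φ t).det = 1)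
    (hφ0 : φ 0 = 1)
    (r θ : ℝ → ℝ → ℝ)
    (hrsmooth : ContDiffOn ℝ (⊤ : ℕ∞) (fun p : ℝ × ℝ => r p.1 p.2) (Icc (0:ℝ) 1 ×ˢ Icc (0:ℝ) (2 * π)))
    (hθsmooth : ContDiffOn ℝ (⊤ : ℕ∞) (fun p : ℝ × ℝ => θ p.1 p.2) (Icc (0:ℝ) 1 ×ˢ Icc (0:ℝ) (2 * π)))
    (hlift : IsPolarLift φ r θ) :
    ((∃ m : ℤ, sInf (windingDelta θ '' Icc (0:ℝ) (2 * π)) = (m : ℝ)) ∨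
     (∃ m : ℤ, sSup (windingDelta θ '' Icc (0:ℝ) (2 * π)) = (m : ℝ))) ↔
    (φ 1 - 1).det = 0 := by
  obtain ⟨hlift1, hlift0⟩ := hlift
  have hπ : (0:ℝ) < π := Real.pi_pos
  have h2π : (0:ℝ) < 2 * π := by linarith
  have h1mem : (1:ℝ) ∈ Icc (0:ℝ) 1 := ⟨zero_le_one, le_refl 1⟩
  have h0mem : (0:ℝ) ∈ Icc (0:ℝ) (2 * π) := ⟨le_refl 0, by linarith⟩
  have h2πmem : 2 * π ∈ Icc (0:ℝ) (2 * π) := ⟨by linarith, le_refl _⟩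
  set A := φ 1 with hAdef
  set D := windingDelta θ with hDdef
  have hDs : ∀ s, D s = (θ 1 s - s) / (2 * π) := fun s => rfl
  have hdet2 : A 0 0 * A 1 1 - A 0 1 * A 1 0 = 1 := by
    have := hφdet 1 h1mem
    rwa [Matrix.det_fin_two] at this
  have hr1pos : ∀ s ∈ Icc (0:ℝ) (2 * π), 0 < r 1 s := fun s hs => (hlift1 1 h1mem s hs).1
  have hc0 : ∀ s ∈ Icc (0:ℝ) (2 * π),
      A 0 0 * Real.cos s + A 0 1 * Real.sin s = r 1 s * Real.cos (θ 1 s) := by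
    intro s hs
    have := congrFun (hlift1 1 h1mem s hs).2 0
    simpa [expVec, Matrix.mulVec, dotProduct, Fin.sum_univ_two] using this
  have hc1 : ∀ s ∈ Icc (0:ℝ) (2 * π),
      A 1 0 * Real.cos s + A 1 1 * Real.sin s = r 1 s * Real.sin (θ 1 s) := by
    intro s hs
    have := congrFun (hlift1 1 h1mem s hs).2 1
    simpa [expVec, Matrix.mulVec, dotProduct, Fin.sum_univ_two] using this
  set q : ℝ → ℝ := fun u => Real.cos u * (A 1 0 * Real.cos u + A 1 1 * Real.sin u)
      - Real.sin u * (A 0 0 * Real.cos u + A 0 1 * Real.sin u) with hqdef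
  have hqu : ∀ u, q u = Real.cos u * (A 1 0 * Real.cos u + A 1 1 * Real.sin u)
      - Real.sin u * (A 0 0 * Real.cos u + A 0 1 * Real.sin u) := fun u => rfl
  have hq : ∀ s ∈ Icc (0:ℝ) (2 * π), q s = r 1 s * Real.sin (θ 1 s - s) := by
    intro s hs
    rw [hqu, hc1 s hs, hc0 s hs, Real.sin_sub]
    ring
  have hqper : ∀ u, q (u + 2 * π) = q u := by
    intro u
    rw [hqu, hqu, Real.cos_add_two_pi, Real.sin_add_two_pi]
  -- continuity of Δ
  have hθ1cont : ContinuousOn (fun s => θ 1 s) (Icc (0:ℝ) (2 * π)) := by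
    have hcm : Continuous fun s : ℝ => ((1:ℝ), s) := continuous_const.prodMk continuous_id
    exact hθsmooth.continuousOn.comp hcm.continuousOn fun s hs => Set.mk_mem_prod h1mem hs
  have hDcont : ContinuousOn D (Icc (0:ℝ) (2 * π)) := by
    have h : ContinuousOn (fun s => (θ 1 s - s) / (2 * π)) (Icc (0:ℝ) (2 * π)) :=
      (hθ1cont.sub continuousOn_id).div_const _
    exact h
  clear_value A D q
  -- periodicity: θ 1 (2π) = θ 1 0 + 2π
  have hper : θ 1 (2 * π) = θ 1 0 + 2 * π := by
    have hexp : expVec (2 * π) = expVec 0 := by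
      funext i
      fin_cases i <;> simp [expVec, Real.cos_two_pi, Real.sin_two_pi]
    have hint : ∀ t ∈ Icc (0:ℝ) 1, ∃ k : ℤ, θ t (2 * π) = θ t 0 + 2 * π * k := by
      intro t ht
      have e2 := (hlift1 t ht (2 * π) h2πmem).2
      have e0 := (hlift1 t ht 0 h0mem).2
      rw [hexp, e0] at e2
      have hr2 := (hlift1 t ht (2 * π) h2πmem).1
      have hr0 := (hlift1 t ht 0 h0mem).1
      have hcc : r t 0 * Real.cos (θ t 0) = r t (2 * π) * Real.cos (θ t (2 * π)) := by
        have := congrFun e2 0; simpa [expVec] using this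
      have hss : r t 0 * Real.sin (θ t 0) = r t (2 * π) * Real.sin (θ t (2 * π)) := by
        have := congrFun e2 1; simpa [expVec] using this
      have u0 := Real.sin_sq_add_cos_sq (θ t 0)
      have u2 := Real.sin_sq_add_cos_sq (θ t (2 * π))
      have hsq : (r t 0)^2 = (r t (2 * π))^2 := by
        linear_combination (r t 0 * Real.cos (θ t 0) + r t (2 * π) * Real.cos (θ t (2 * π))) * hcc
          + (r t 0 * Real.sin (θ t 0) + r t (2 * π) * Real.sin (θ t (2 * π))) * hss
          - (r t 0)^2 * u0 + (r t (2 * π))^2 * u2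
      have hfac : (r t 0 - r t (2 * π)) * (r t 0 + r t (2 * π)) = 0 := by
        linear_combination hsq
      have hreq : r t 0 = r t (2 * π) := by
        rcases mul_eq_zero.mp hfac with h' | h'
        · linarith
        · linarith
      rw [hreq] at hcc hss
      have hcc' : Real.cos (θ t (2 * π)) = Real.cos (θ t 0) :=
        (mul_left_cancel₀ (ne_of_gt hr2) hcc).symm
      have hss' : Real.sin (θ t (2 * π)) = Real.sin (θ t 0) :=
        (mul_left_cancel₀ (ne_of_gt hr2) hss).symm
      obtain ⟨k, hk⟩ := aux_int_diff _ _ hcc' hss'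
      exact ⟨k, hk⟩
    have hgc : ContinuousOn (fun t => θ t (2 * π) - θ t 0) (Icc (0:ℝ) 1) := by
      have c1 : Continuous fun t : ℝ => (t, 2 * π) := continuous_id.prodMk continuous_const
      have c2 : Continuous fun t : ℝ => (t, (0:ℝ)) := continuous_id.prodMk continuous_const
      exact (hθsmooth.continuousOn.comp c1.continuousOn fun t ht =>
          Set.mk_mem_prod ht h2πmem).sub
        (hθsmooth.continuousOn.comp c2.continuousOn fun t ht => Set.mk_mem_prod ht h0mem)
    obtain ⟨k1, hk1⟩ := hint 1 h1mem
    have hg0 : θ 0 (2 * π) - θ 0 0 = 2 * π := by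
      rw [hlift0 _ h2πmem, hlift0 _ h0mem]; ring
    by_contra hne
    have hk1ne : k1 ≠ 1 := by
      rintro rfl
      apply hne
      push_cast at hk1
      linarith
    have hsub : uIcc (1:ℝ) 0 ⊆ Icc (0:ℝ) 1 := by
      rw [Set.uIcc_comm, Set.uIcc_of_le zero_le_one]
    have hIVT := intermediate_value_uIcc (a := (1:ℝ)) (b := 0)
      (f := fun t => θ t (2 * π) - θ t 0) (hgc.mono hsub)
    rcases (by omega : k1 ≤ 0 ∨ 2 ≤ k1) with hk | hk
    · have hk1r : (k1 : ℝ) ≤ 0 := by exact_mod_cast hk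
      have hy : π ∈ uIcc (θ 1 (2 * π) - θ 1 0) (θ 0 (2 * π) - θ 0 0) := by
        rw [hg0, Set.mem_uIcc]
        left
        constructor
        · rw [hk1]; push_cast; nlinarith
        · linarith
      obtain ⟨t', ht', hgt'⟩ := hIVT hy
      obtain ⟨k', hk'⟩ := hint t' (hsub ht')
      have hgt'' : θ t' (2 * π) - θ t' 0 = π := hgt'
      rw [hk'] at hgt''
      have h2k : (2 * (k' : ℝ)) * π = 1 * π := by push_cast at hgt'' ⊢; linarith
      have h2k' : (2 * (k' : ℝ)) = 1 := mul_right_cancel₀ (ne_of_gt hπ) h2k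
      have : (2 * k' : ℤ) = 1 := by exact_mod_cast h2k'
      omega
    · have hk1r : (2 : ℝ) ≤ (k1 : ℝ) := by exact_mod_cast hk
      have hy : 3 * π ∈ uIcc (θ 1 (2 * π) - θ 1 0) (θ 0 (2 * π) - θ 0 0) := by
        rw [hg0, Set.mem_uIcc]
        right
        constructor
        · linarith
        · rw [hk1]; push_cast; nlinarith
      obtain ⟨t', ht', hgt'⟩ := hIVT hy
      obtain ⟨k', hk'⟩ := hint t' (hsub ht')
      have hgt'' : θ t' (2 * π) - θ t' 0 = 3 * π := hgt'
      rw [hk'] at hgt''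
      have h2k : (2 * (k' : ℝ)) * π = 3 * π := by push_cast at hgt'' ⊢; linarith
      have h2k' : (2 * (k' : ℝ)) = 3 := mul_right_cancel₀ (ne_of_gt hπ) h2k
      have : (2 * k' : ℤ) = 3 := by exact_mod_cast h2k'
      omega
  have hD20 : D (2 * π) = D 0 := by
    rw [hDs, hDs, hper]; ring
  -- comparing Δ with an integer via the sign of sin(θ 1 s - s)
  have hsin2D : ∀ (s : ℝ) (m : ℤ), θ 1 s - s = 2 * π * (D s - m) + m * (2 * π) := by
    intro s m
    have : D s * (2 * π) = θ 1 s - s := by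
      rw [hDs]; field_simp
    linarith
  have hDlt : ∀ (s : ℝ) (m : ℤ), |D s - (m:ℝ)| < 1/2 → Real.sin (θ 1 s - s) < 0 →
      D s < (m:ℝ) := by
    intro s m hnear hsin
    by_contra hge
    push_neg at hge
    apply absurd hsin
    push_neg
    rw [hsin2D s m, Real.sin_add_int_mul_two_pi]
    apply Real.sin_nonneg_of_nonneg_of_le_pi
    · nlinarith
    · have := abs_lt.mp hnear
      nlinarith [this.2]
  have hDgt : ∀ (s : ℝ) (m : ℤ), |D s - (m:ℝ)| < 1/2 → 0 < Real.sin (θ 1 s - s) →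
      (m:ℝ) < D s := by
    intro s m hnear hsin
    by_contra hle
    push_neg at hle
    apply absurd hsin
    push_neg
    rw [hsin2D s m, Real.sin_add_int_mul_two_pi]
    apply Real.sin_nonpos_of_nonpos_of_neg_pi_le
    · nlinarith
    · have := abs_lt.mp hnear
      nlinarith [this.1]
  have hsinq : ∀ s ∈ Icc (0:ℝ) (2 * π),
      (q s < 0 → Real.sin (θ 1 s - s) < 0) ∧ (0 < q s → 0 < Real.sin (θ 1 s - s)) := by
    intro s hs
    have hqs := hq s hs
    have hrp := hr1pos s hs
    constructor
    · intro h
      by_contra h'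
      push_neg at h'
      nlinarith
    · intro h
      by_contra h'
      push_neg at h'
      nlinarith
  -- local sign change of q near an eigendirection with eigenvalue ρ ≠ 1
  have hqsign : ∀ (a ρ : ℝ), 0 < ρ → ρ ≠ 1 →
      A 0 0 * Real.cos a + A 0 1 * Real.sin a = ρ * Real.cos a →
      A 1 0 * Real.cos a + A 1 1 * Real.sin a = ρ * Real.sin a →
      ∀ ε > 0, ∃ x, 0 < x ∧ x < ε ∧
        0 < q (a + x) * (1 - ρ^2) ∧ q (a - x) * (1 - ρ^2) < 0 := by
    intro a ρ hρ hρ1 h3 h4 ε hε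
    set α := Real.cos a * (A 0 1 * Real.cos a - A 0 0 * Real.sin a)
          + Real.sin a * (A 1 1 * Real.cos a - A 1 0 * Real.sin a) with hα
    have hK : (1 - ρ^2) ≠ 0 := by
      intro h
      have h' : (ρ - 1) * (ρ + 1) = 0 := by nlinarith
      rcases mul_eq_zero.mp h' with h'' | h''
      · exact hρ1 (by linarith)
      · linarith
    have hid : ∀ y : ℝ, ρ * q (a + y)
        = Real.sin y * ((1 - ρ^2) * Real.cos y - ρ * α * Real.sin y) := by
      intro y
      have h1 : Real.cos a ^ 2 + Real.sin a ^ 2 = 1 := Real.cos_sq_add_sin_sq a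
      have hkey := aux_key_identity (Real.cos a) (Real.sin a) (Real.cos y) (Real.sin y) ρ
        (A 0 0) (A 0 1) (A 1 0) (A 1 1) h1 hdet2 h3 h4
      rw [hqu, Real.cos_add, Real.sin_add]
      rw [hα]
      linear_combination hkey
    set β := |α| + 1 with hβ
    have hβpos : 0 < β := by positivity
    have hα1 : α ≤ β := by have := le_abs_self α; linarith
    have hα2 : -β ≤ α := by have := neg_abs_le α; linarith
    have hKpos : 0 < |1 - ρ^2| := abs_pos.mpr hK
    set x := min (min (ε/2) (π/4)) (|1 - ρ^2| / (4 * ρ * β)) / 2 with hx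
    have hxpos : 0 < x := by
      apply div_pos _ (by norm_num)
      apply lt_min
      · apply lt_min
        · linarith
        · linarith
      · apply div_pos hKpos
        positivity
    have hxε : x < ε := by
      have h1' : x ≤ ε / 2 / 2 := by
        rw [hx]
        have := min_le_left (min (ε/2) (π/4)) (|1 - ρ^2| / (4 * ρ * β))
        have := min_le_left (ε/2) (π/4)
        apply div_le_div_of_nonneg_right ?_ (by norm_num)
        · calc min (min (ε/2) (π/4)) (|1 - ρ^2| / (4 * ρ * β)) ≤ min (ε/2) (π/4) :=
              min_le_left _ _
            _ ≤ ε/2 := min_le_left _ _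
      linarith
    have hxpi : x ≤ π/4 := by
      rw [hx]
      calc min (min (ε/2) (π/4)) (|1 - ρ^2| / (4 * ρ * β)) / 2
          ≤ min (ε/2) (π/4) / 2 := by
            apply div_le_div_of_nonneg_right (min_le_left _ _) (by norm_num)
        _ ≤ π/4 / 2 := by
            apply div_le_div_of_nonneg_right (min_le_right _ _) (by norm_num)
        _ ≤ π/4 := by linarith
    have hx1 : x ≤ 1 := by
      have : π < 3.15 := Real.pi_lt_d2
      linarith
    have hxK : ρ * β * x < |1 - ρ^2| / 2 := by
      have h1' : x ≤ |1 - ρ^2| / (4 * ρ * β) / 2 := by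
        rw [hx]
        apply div_le_div_of_nonneg_right (min_le_right _ _) (by norm_num)
      have h2' : ρ * β * (|1 - ρ^2| / (4 * ρ * β) / 2) = |1 - ρ^2| / 8 := by
        field_simp
        ring
      have h3' : ρ * β * x ≤ |1 - ρ^2| / 8 := by
        rw [← h2']
        apply mul_le_mul_of_nonneg_left h1' (by positivity)
      linarith
    have hsinx : 0 < Real.sin x := Real.sin_pos_of_pos_of_lt_pi hxpos (by linarith)
    have hsinle : Real.sin x ≤ x := le_of_lt (Real.sin_lt hxpos)
    have hcosx : 1/2 < Real.cos x := by
      have := Real.one_sub_sq_div_two_lt_cos (ne_of_gt hxpos)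
      nlinarith
    -- bounds for ρ α sin x
    have e1 : ρ * α * Real.sin x ≤ ρ * β * x := by
      nlinarith [mul_nonneg (mul_pos hρ hβpos).le (sub_nonneg.mpr hsinle),
        mul_nonneg (mul_pos hρ hsinx).le (sub_nonneg.mpr hα1)]
    have e2 : -(ρ * β * x) ≤ ρ * α * Real.sin x := by
      nlinarith [mul_nonneg (mul_pos hρ hβpos).le (sub_nonneg.mpr hsinle),
        mul_nonneg (mul_pos hρ hsinx).le (sub_nonneg.mpr (by linarith : (0:ℝ) ≤ α - (-β)))]
    clear_value x β α
    have hcore1 : 0 < (1 - ρ^2) * ((1 - ρ^2) * Real.cos x - ρ * α * Real.sin x) := by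
      rcases lt_or_gt_of_ne hK with hKneg | hKpos2
      · rw [abs_of_neg hKneg] at hxK
        have c1 : (1 - ρ^2) * Real.cos x < (1 - ρ^2) * (1/2) :=
          mul_lt_mul_of_neg_left hcosx hKneg
        have c3 : (1 - ρ^2) * Real.cos x - ρ * α * Real.sin x < 0 := by linarith
        exact mul_pos_of_neg_of_neg hKneg c3
      · rw [abs_of_pos hKpos2] at hxK
        have c1 : (1 - ρ^2) * (1/2) < (1 - ρ^2) * Real.cos x :=
          mul_lt_mul_of_pos_left hcosx hKpos2
        have c3 : 0 < (1 - ρ^2) * Real.cos x - ρ * α * Real.sin x := by linarith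
        exact mul_pos hKpos2 c3
    have hcore2 : 0 < (1 - ρ^2) * ((1 - ρ^2) * Real.cos x + ρ * α * Real.sin x) := by
      rcases lt_or_gt_of_ne hK with hKneg | hKpos2
      · rw [abs_of_neg hKneg] at hxK
        have c1 : (1 - ρ^2) * Real.cos x < (1 - ρ^2) * (1/2) :=
          mul_lt_mul_of_neg_left hcosx hKneg
        have c3 : (1 - ρ^2) * Real.cos x + ρ * α * Real.sin x < 0 := by linarith
        exact mul_pos_of_neg_of_neg hKneg c3
      · rw [abs_of_pos hKpos2] at hxK
        have c1 : (1 - ρ^2) * (1/2) < (1 - ρ^2) * Real.cos x :=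
          mul_lt_mul_of_pos_left hcosx hKpos2
        have c3 : 0 < (1 - ρ^2) * Real.cos x + ρ * α * Real.sin x := by linarith
        exact mul_pos hKpos2 c3
    refine ⟨x, hxpos, hxε, ?_, ?_⟩
    · have hidx := hid x
      have h7 : 0 < ρ * (q (a + x) * (1 - ρ^2)) := by
        have : ρ * (q (a + x) * (1 - ρ^2)) = (ρ * q (a + x)) * (1 - ρ^2) := by ring
        rw [this, hidx]
        have : Real.sin x * ((1 - ρ^2) * Real.cos x - ρ * α * Real.sin x) * (1 - ρ^2)
            = Real.sin x * ((1 - ρ^2) * ((1 - ρ^2) * Real.cos x - ρ * α * Real.sin x)) := by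
          ring
        rw [this]
        exact mul_pos hsinx hcore1
      nlinarith [h7, hρ]
    · have hidx := hid (-x)
      rw [Real.sin_neg, Real.cos_neg] at hidx
      have hax : a + -x = a - x := by ring
      rw [hax] at hidx
      have h7 : ρ * (q (a - x) * (1 - ρ^2)) < 0 := by
        have h8 : ρ * (q (a - x) * (1 - ρ^2)) = (ρ * q (a - x)) * (1 - ρ^2) := by ring
        rw [h8, hidx]
        have h9 : -Real.sin x * ((1 - ρ^2) * Real.cos x - ρ * α * -Real.sin x) * (1 - ρ^2)
            = -(Real.sin x * ((1 - ρ^2) * ((1 - ρ^2) * Real.cos x + ρ * α * Real.sin x))) := by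
          ring
        rw [h9]
        exact neg_lt_zero.mpr (mul_pos hsinx hcore2)
      nlinarith [h7, hρ]
    -- main dichotomy: near a point where Δ is an integer, if the eigenvalue is ≠ 1
  -- then Δ takes values both above and below that integer
  have sign1 : ∀ u w : ℝ, 0 < u * w → w < 0 → u < 0 := by
    intro u w h hw; by_contra h'; push_neg at h'; nlinarith
  have sign2 : ∀ u w : ℝ, 0 < u * w → 0 < w → 0 < u := by
    intro u w h hw; by_contra h'; push_neg at h'; nlinarith
  have sign3 : ∀ u w : ℝ, u * w < 0 → w < 0 → 0 < u := by
    intro u w h hw; by_contra h'; push_neg at h'; nlinarith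
  have sign4 : ∀ u w : ℝ, u * w < 0 → 0 < w → u < 0 := by
    intro u w h hw; by_contra h'; push_neg at h'; nlinarith
  have hmain : ∀ (m : ℤ) (a : ℝ), a ∈ Icc (0:ℝ) (2 * π) → a ≠ 2 * π → D a = (m:ℝ) →
      (A - 1).det ≠ 0 →
      (∃ s ∈ Icc (0:ℝ) (2 * π), D s < (m:ℝ)) ∧ (∃ s ∈ Icc (0:ℝ) (2 * π), (m:ℝ) < D s) := by
    intro m a ha hane hDa hdet
    have hθa : θ 1 a = a + (m:ℝ) * (2 * π) := by
      have h' := hDs a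
      rw [hDa] at h'
      field_simp at h'
      linarith
    have hca : Real.cos (θ 1 a) = Real.cos a := by
      rw [hθa]; exact Real.cos_add_int_mul_two_pi a m
    have hsa : Real.sin (θ 1 a) = Real.sin a := by
      rw [hθa]; exact Real.sin_add_int_mul_two_pi a m
    have hρpos : 0 < r 1 a := hr1pos a ha
    have h3 : A 0 0 * Real.cos a + A 0 1 * Real.sin a = r 1 a * Real.cos a := by
      have h' := hc0 a ha; rw [hca] at h'; exact h'
    have h4 : A 1 0 * Real.cos a + A 1 1 * Real.sin a = r 1 a * Real.sin a := by
      have h' := hc1 a ha; rw [hsa] at h'; exact h'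
    have hρ1 : r 1 a ≠ 1 := by
      intro h1'
      apply hdet
      apply Matrix.exists_mulVec_eq_zero_iff.mp
      refine ⟨expVec a, ?_, ?_⟩
      · intro h0
        have h0' := congrFun h0 0
        have h1'' := congrFun h0 1
        simp [expVec] at h0' h1''
        nlinarith [Real.sin_sq_add_cos_sq a]
      · rw [h1'] at h3 h4
        funext i
        fin_cases i <;>
          simp [expVec, Matrix.mulVec, dotProduct, Fin.sum_univ_two, Matrix.sub_apply,
            Matrix.one_apply] <;> linarith
    have hKne : (1 - (r 1 a)^2) ≠ 0 := by
      intro h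
      have h' : (r 1 a - 1) * (r 1 a + 1) = 0 := by nlinarith
      rcases mul_eq_zero.mp h' with h'' | h''
      · exact hρ1 (by linarith)
      · linarith
    have hCa := hDcont a ha
    rw [Metric.continuousWithinAt_iff] at hCa
    obtain ⟨δ₁, hδ₁pos, hδ₁⟩ := hCa (1/2) (by norm_num)
    rcases eq_or_lt_of_le ha.1 with ha0 | ha0
    · -- a = 0, wrap around through 2π
      have haz : a = 0 := ha0.symm
      have hD2 : D (2 * π) = (m:ℝ) := by rw [hD20, ← haz, hDa]
      have hC2 := hDcont (2 * π) h2πmem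
      rw [Metric.continuousWithinAt_iff] at hC2
      obtain ⟨δ₂, hδ₂pos, hδ₂⟩ := hC2 (1/2) (by norm_num)
      obtain ⟨x, hx0, hxε, hqp, hqm⟩ := hqsign a (r 1 a) hρpos hρ1 h3 h4
        (min (min δ₁ δ₂) (2 * π)) (lt_min (lt_min hδ₁pos hδ₂pos) h2π)
      have hxδ₁ : x < δ₁ := lt_of_lt_of_le hxε (le_trans (min_le_left _ _) (min_le_left _ _))
      have hxδ₂ : x < δ₂ := lt_of_lt_of_le hxε (le_trans (min_le_left _ _) (min_le_right _ _))
      have hx2π : x < 2 * π := lt_of_lt_of_le hxε (min_le_right _ _)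
      have hsp : a + x ∈ Icc (0:ℝ) (2 * π) := by
        rw [haz]; exact ⟨by linarith, by linarith⟩
      have hsm : 2 * π - x ∈ Icc (0:ℝ) (2 * π) := ⟨by linarith, by linarith⟩
      have hnearp : |D (a + x) - (m:ℝ)| < 1/2 := by
        have h' := hδ₁ hsp (by
          rw [Real.dist_eq, show a + x - a = x by ring, abs_of_pos hx0]; exact hxδ₁)
        rw [Real.dist_eq, hDa] at h'
        exact h'
      have hnearm : |D (2 * π - x) - (m:ℝ)| < 1/2 := by
        have h' := hδ₂ hsm (by
          rw [Real.dist_eq, show 2*π - x - 2*π = -x by ring, abs_neg, abs_of_pos hx0]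
          exact hxδ₂)
        rw [Real.dist_eq, hD2] at h'
        exact h'
      have hqm2 : q (2 * π - x) * (1 - (r 1 a)^2) < 0 := by
        have hqq : q (2 * π - x) = q (a - x) := by
          rw [haz, show 2*π - (x:ℝ) = (0 - x) + 2*π by ring, hqper]
        rw [hqq]
        exact hqm
      rcases lt_or_gt_of_ne hKne with hKneg | hKpos
      · have hq1 : q (a + x) < 0 := sign1 _ _ hqp hKneg
        have hq2 : 0 < q (2 * π - x) := sign3 _ _ hqm2 hKneg
        exact ⟨⟨a + x, hsp, hDlt _ m hnearp ((hsinq _ hsp).1 hq1)⟩,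
               ⟨2 * π - x, hsm, hDgt _ m hnearm ((hsinq _ hsm).2 hq2)⟩⟩
      · have hq1 : 0 < q (a + x) := sign2 _ _ hqp hKpos
        have hq2 : q (2 * π - x) < 0 := sign4 _ _ hqm2 hKpos
        exact ⟨⟨2 * π - x, hsm, hDlt _ m hnearm ((hsinq _ hsm).1 hq2)⟩,
               ⟨a + x, hsp, hDgt _ m hnearp ((hsinq _ hsp).2 hq1)⟩⟩
    · -- 0 < a < 2π
      have ha2π : a < 2 * π := lt_of_le_of_ne ha.2 hane
      obtain ⟨x, hx0, hxε, hqp, hqm⟩ := hqsign a (r 1 a) hρpos hρ1 h3 h4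
        (min (min δ₁ a) (2 * π - a)) (lt_min (lt_min hδ₁pos ha0) (by linarith))
      have hxδ₁ : x < δ₁ := lt_of_lt_of_le hxε (le_trans (min_le_left _ _) (min_le_left _ _))
      have hxa : x < a := lt_of_lt_of_le hxε (le_trans (min_le_left _ _) (min_le_right _ _))
      have hxb : x < 2 * π - a := lt_of_lt_of_le hxε (min_le_right _ _)
      have hsp : a + x ∈ Icc (0:ℝ) (2 * π) := ⟨by linarith [ha.1], by linarith⟩
      have hsm : a - x ∈ Icc (0:ℝ) (2 * π) := ⟨by linarith, by linarith [ha.2]⟩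
      have hnearp : |D (a + x) - (m:ℝ)| < 1/2 := by
        have h' := hδ₁ hsp (by
          rw [Real.dist_eq, show a + x - a = x by ring, abs_of_pos hx0]; exact hxδ₁)
        rw [Real.dist_eq, hDa] at h'
        exact h'
      have hnearm : |D (a - x) - (m:ℝ)| < 1/2 := by
        have h' := hδ₁ hsm (by
          rw [Real.dist_eq, show a - x - a = -x by ring, abs_neg, abs_of_pos hx0]
          exact hxδ₁)
        rw [Real.dist_eq, hDa] at h'
        exact h'
      rcases lt_or_gt_of_ne hKne with hKneg | hKpos
      · have hq1 : q (a + x) < 0 := sign1 _ _ hqp hKneg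
        have hq2 : 0 < q (a - x) := sign3 _ _ hqm hKneg
        exact ⟨⟨a + x, hsp, hDlt _ m hnearp ((hsinq _ hsp).1 hq1)⟩,
               ⟨a - x, hsm, hDgt _ m hnearm ((hsinq _ hsm).2 hq2)⟩⟩
      · have hq1 : 0 < q (a + x) := sign2 _ _ hqp hKpos
        have hq2 : q (a - x) < 0 := sign4 _ _ hqm hKpos
        exact ⟨⟨a - x, hsm, hDlt _ m hnearm ((hsinq _ hsm).1 hq2)⟩,
               ⟨a + x, hsp, hDgt _ m hnearp ((hsinq _ hsp).2 hq1)⟩⟩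
  constructor
  · -- forward direction
    intro hiv
    by_contra hdet
    have himg : IsCompact (D '' Icc (0:ℝ) (2 * π)) :=
      isCompact_Icc.image_of_continuousOn hDcont
    have hne : (D '' Icc (0:ℝ) (2 * π)).Nonempty := ⟨D 0, ⟨0, h0mem, rfl⟩⟩
    rcases hiv with ⟨m, hm⟩ | ⟨m, hm⟩
    · have hmem := himg.sInf_mem hne
      rw [hm] at hmem
      obtain ⟨a, ha, hDa⟩ := hmem
      have hlb : ∀ s ∈ Icc (0:ℝ) (2 * π), (m:ℝ) ≤ D s := by
        intro s hs
        rw [← hm]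
        exact csInf_le himg.bddBelow ⟨s, hs, rfl⟩
      rcases eq_or_ne a (2 * π) with rfl | hane
      · have hD0 : D 0 = (m:ℝ) := by rw [← hD20, hDa]
        obtain ⟨⟨s, hs, hlt⟩, -⟩ := hmain m 0 h0mem (ne_of_lt h2π) hD0 hdet
        exact absurd (hlb s hs) (not_le.mpr hlt)
      · obtain ⟨⟨s, hs, hlt⟩, -⟩ := hmain m a ha hane hDa hdet
        exact absurd (hlb s hs) (not_le.mpr hlt)
    · have hmem := himg.sSup_mem hne
      rw [hm] at hmem
      obtain ⟨a, ha, hDa⟩ := hmem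
      have hub : ∀ s ∈ Icc (0:ℝ) (2 * π), D s ≤ (m:ℝ) := by
        intro s hs
        rw [← hm]
        exact le_csSup himg.bddAbove ⟨s, hs, rfl⟩
      rcases eq_or_ne a (2 * π) with rfl | hane
      · have hD0 : D 0 = (m:ℝ) := by rw [← hD20, hDa]
        obtain ⟨-, ⟨s, hs, hlt⟩⟩ := hmain m 0 h0mem (ne_of_lt h2π) hD0 hdet
        exact absurd (hub s hs) (not_le.mpr hlt)
      · obtain ⟨-, ⟨s, hs, hlt⟩⟩ := hmain m a ha hane hDa hdet
        exact absurd (hub s hs) (not_le.mpr hlt)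
  · -- reverse direction
    intro hdeg
    have hdeg2 : (A 0 0 - 1) * (A 1 1 - 1) - A 0 1 * A 1 0 = 0 := by
      have h' := hdeg
      rw [Matrix.det_fin_two] at h'
      simpa [Matrix.sub_apply, Matrix.one_apply] using h'
    have htr : A 0 0 + A 1 1 = 2 := by linear_combination hdet2 - hdeg2
    obtain ⟨v, hv0, hv⟩ := Matrix.exists_mulVec_eq_zero_iff.mpr hdeg
    rw [Matrix.sub_mulVec, Matrix.one_mulVec, sub_eq_zero] at hv
    have hv0' : A 0 0 * v 0 + A 0 1 * v 1 = v 0 := by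
      have := congrFun hv 0
      simpa [Matrix.mulVec, dotProduct, Fin.sum_univ_two] using this
    have hv1' : A 1 0 * v 0 + A 1 1 * v 1 = v 1 := by
      have := congrFun hv 1
      simpa [Matrix.mulVec, dotProduct, Fin.sum_univ_two] using this
    have hvne : v 0 ≠ 0 ∨ v 1 ≠ 0 := by
      by_contra h
      push_neg at h
      exact hv0 (funext fun i => by fin_cases i <;> simp [h.1, h.2])
    have hnn : (0:ℝ) < v 0 ^ 2 + v 1 ^ 2 := by
      rcases hvne with h | h
      · positivity
      · positivity
    have hnpos : 0 < Real.sqrt (v 0 ^ 2 + v 1 ^ 2) := Real.sqrt_pos.mpr hnn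
    have hn2 : Real.sqrt (v 0 ^ 2 + v 1 ^ 2) ^ 2 = v 0 ^ 2 + v 1 ^ 2 :=
      Real.sq_sqrt (le_of_lt hnn)
    have hxy : (v 0 / Real.sqrt (v 0 ^ 2 + v 1 ^ 2)) ^ 2
        + (v 1 / Real.sqrt (v 0 ^ 2 + v 1 ^ 2)) ^ 2 = 1 := by
      rw [div_pow, div_pow, ← add_div, hn2]
      exact div_self (ne_of_gt hnn)
    obtain ⟨s₀, hs₀, hcos0, hsin0⟩ := aux_exists_angle _ _ hxy
    have h3 : A 0 0 * Real.cos s₀ + A 0 1 * Real.sin s₀ = Real.cos s₀ := by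
      rw [hcos0, hsin0]
      field_simp
      linarith [hv0']
    have h4 : A 1 0 * Real.cos s₀ + A 1 1 * Real.sin s₀ = Real.sin s₀ := by
      rw [hcos0, hsin0]
      field_simp
      linarith [hv1']
    have hρpos := hr1pos s₀ hs₀
    have e1 : Real.cos s₀ = r 1 s₀ * Real.cos (θ 1 s₀) := by rw [← h3]; exact hc0 s₀ hs₀
    have e2 : Real.sin s₀ = r 1 s₀ * Real.sin (θ 1 s₀) := by rw [← h4]; exact hc1 s₀ hs₀
    have hr1' : r 1 s₀ = 1 := by
      have u0 := Real.sin_sq_add_cos_sq s₀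
      have u1 := Real.sin_sq_add_cos_sq (θ 1 s₀)
      have hsq : (r 1 s₀)^2 = 1 := by
        linear_combination (-(r 1 s₀)^2) * u1 + u0
          - (Real.sin s₀ + r 1 s₀ * Real.sin (θ 1 s₀)) * e2
          - (Real.cos s₀ + r 1 s₀ * Real.cos (θ 1 s₀)) * e1
      have hfac : (r 1 s₀ - 1) * (r 1 s₀ + 1) = 0 := by linear_combination hsq
      rcases mul_eq_zero.mp hfac with h' | h'
      · linarith
      · linarith
    rw [hr1', one_mul] at e1 e2
    obtain ⟨k, hk⟩ := aux_int_diff (θ 1 s₀) s₀ e1.symm e2.symm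
    have hDs₀ : D s₀ = (k:ℝ) := by
      rw [hDs, hk]
      field_simp
      ring
    have hsd : (A 0 0 - 1) ^ 2 + A 0 1 * A 1 0 = 0 := by
      linear_combination (A 0 0 - 1) * htr - hdeg2
    have hqform : ∀ s, q s = A 1 0 * Real.cos s ^ 2
        - 2 * (A 0 0 - 1) * Real.cos s * Real.sin s - A 0 1 * Real.sin s ^ 2 := by
      intro s
      rw [hqu]
      linear_combination (Real.cos s * Real.sin s) * htr
    rcases aux_semidef (A 0 0 - 1) (A 0 1) (A 1 0) hsd with hpos | hneg
    · left
      refine ⟨k, ?_⟩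
      have hlb : ∀ s₁ ∈ Icc (0:ℝ) (2 * π), (k:ℝ) ≤ D s₁ := by
        intro s₁ hs₁
        by_contra hlt
        push_neg at hlt
        set y : ℝ := (max (D s₁) ((k:ℝ) - 1/2) + k) / 2 with hy
        have hmax1 : D s₁ ≤ max (D s₁) ((k:ℝ) - 1/2) := le_max_left _ _
        have hmax2 : (k:ℝ) - 1/2 ≤ max (D s₁) ((k:ℝ) - 1/2) := le_max_right _ _
        have hmaxlt : max (D s₁) ((k:ℝ) - 1/2) < (k:ℝ) := max_lt hlt (by norm_num)
        have hy1 : D s₁ < y := by rw [hy]; linarith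
        have hy2 : y < (k:ℝ) := by rw [hy]; linarith
        have hy3 : (k:ℝ) - 1/2 < y := by rw [hy]; linarith
        have hsub : uIcc s₀ s₁ ⊆ Icc (0:ℝ) (2 * π) := Set.uIcc_subset_Icc hs₀ hs₁
        have hyI : y ∈ uIcc (D s₀) (D s₁) := by
          rw [Set.mem_uIcc]
          right
          exact ⟨le_of_lt hy1, by rw [hDs₀]; linarith⟩
        obtain ⟨s₂, hs₂, hDs₂⟩ := intermediate_value_uIcc (hDcont.mono hsub) hyI
        have hs₂' : s₂ ∈ Icc (0:ℝ) (2 * π) := hsub hs₂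
        have hDy : D s₂ = y := hDs₂
        have hq0 : 0 ≤ q s₂ := by rw [hqform]; exact hpos _ _
        have hsinnn : 0 ≤ Real.sin (θ 1 s₂ - s₂) := by
          have hqs := hq s₂ hs₂'
          have hrp := hr1pos s₂ hs₂'
          by_contra h'
          push_neg at h'
          have hneg2 : r 1 s₂ * Real.sin (θ 1 s₂ - s₂) < 0 := mul_neg_of_pos_of_neg hrp h'
          rw [← hqs] at hneg2
          linarith
        have hsneg : Real.sin (θ 1 s₂ - s₂) < 0 := by
          rw [hsin2D s₂ k, Real.sin_add_int_mul_two_pi]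
          apply Real.sin_neg_of_neg_of_neg_pi_lt
          · rw [hDy]
            exact mul_neg_of_pos_of_neg h2π (by linarith)
          · rw [hDy]
            have h9 : -(1/2 : ℝ) < y - (k:ℝ) := by linarith
            calc -π = 2 * π * (-(1/2)) := by ring
              _ < 2 * π * (y - (k:ℝ)) := mul_lt_mul_of_pos_left h9 h2π
        linarith
      apply le_antisymm
      · exact csInf_le ⟨(k:ℝ), fun z hz => by
            obtain ⟨s, hs, rfl⟩ := hz; exact hlb s hs⟩ ⟨s₀, hs₀, hDs₀⟩
      · exact le_csInf ⟨D s₀, ⟨s₀, hs₀, rfl⟩⟩ (fun z hz => by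
            obtain ⟨s, hs, rfl⟩ := hz; exact hlb s hs)
    · right
      refine ⟨k, ?_⟩
      have hub : ∀ s₁ ∈ Icc (0:ℝ) (2 * π), D s₁ ≤ (k:ℝ) := by
        intro s₁ hs₁
        by_contra hlt
        push_neg at hlt
        set y : ℝ := (min (D s₁) ((k:ℝ) + 1/2) + k) / 2 with hy
        have hmin1 : min (D s₁) ((k:ℝ) + 1/2) ≤ D s₁ := min_le_left _ _
        have hmin2 : min (D s₁) ((k:ℝ) + 1/2) ≤ (k:ℝ) + 1/2 := min_le_right _ _
        have hmingt : (k:ℝ) < min (D s₁) ((k:ℝ) + 1/2) := lt_min hlt (by norm_num)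
        have hy1 : y < D s₁ := by rw [hy]; linarith
        have hy2 : (k:ℝ) < y := by rw [hy]; linarith
        have hy3 : y < (k:ℝ) + 1/2 := by rw [hy]; linarith
        have hsub : uIcc s₀ s₁ ⊆ Icc (0:ℝ) (2 * π) := Set.uIcc_subset_Icc hs₀ hs₁
        have hyI : y ∈ uIcc (D s₀) (D s₁) := by
          rw [Set.mem_uIcc]
          left
          exact ⟨by rw [hDs₀]; linarith, le_of_lt hy1⟩
        obtain ⟨s₂, hs₂, hDs₂⟩ := intermediate_value_uIcc (hDcont.mono hsub) hyI
        have hs₂' : s₂ ∈ Icc (0:ℝ) (2 * π) := hsub hs₂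
        have hDy : D s₂ = y := hDs₂
        have hq0 : q s₂ ≤ 0 := by rw [hqform]; exact hneg _ _
        have hsinnn : Real.sin (θ 1 s₂ - s₂) ≤ 0 := by
          have hqs := hq s₂ hs₂'
          have hrp := hr1pos s₂ hs₂'
          by_contra h'
          push_neg at h'
          have hpos2 : 0 < r 1 s₂ * Real.sin (θ 1 s₂ - s₂) := mul_pos hrp h'
          rw [← hqs] at hpos2
          linarith
        have hspos : 0 < Real.sin (θ 1 s₂ - s₂) := by
          rw [hsin2D s₂ k, Real.sin_add_int_mul_two_pi]
          apply Real.sin_pos_of_pos_of_lt_pi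
          · rw [hDy]
            exact mul_pos h2π (by linarith)
          · rw [hDy]
            have h9 : y - (k:ℝ) < 1/2 := by linarith
            calc 2 * π * (y - (k:ℝ)) < 2 * π * (1/2) := mul_lt_mul_of_pos_left h9 h2π
              _ = π := by ring
        linarith
      apply le_antisymm
      · exact csSup_le ⟨D s₀, ⟨s₀, hs₀, rfl⟩⟩ (fun z hz => by
            obtain ⟨s, hs, rfl⟩ := hz; exact hub s hs)
      · exact le_csSup ⟨(k:ℝ), fun z hz => by
            obtain ⟨s, hs, rfl⟩ := hz; exact hub s hs⟩ ⟨s₀, hs₀, hDs₀⟩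
end
end

section
/- Let φ:[0,1]→Sp(1) be smooth with φ(0)=I and let (r,θ) be a smooth polar lift of φ, with associated function Δ. If s̄ ∈ [0,2π] is a point at which Δ attains its minimum over [0,2π] (or at which Δ attains its maximum over [0,2π]) and Δ(s̄) ∈ ℤ, then φ(1)·e^{is̄} = e^{is̄}; in particular r(1,s̄) = 1 and e^{is̄} is an eigenvector of φ(1) with eigenvalue 1. -/
open Real Set Matrix Topology Filter

noncomputable section

/-- At a minimum over `[0,b]`, the right-sided derivative is nonnegative. -/
lemma right_deriv_nonneg' {h : ℝ → ℝ} {b s0 d : ℝ} (hs0 : 0 ≤ s0) (hlt : s0 < b)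
    (hd : HasDerivWithinAt h d (Icc 0 b) s0)
    (hmin : ∀ s ∈ Icc (0:ℝ) b, h s0 ≤ h s) : 0 ≤ d := by
  have hsub : Ioc s0 b ⊆ Icc 0 b \ {s0} := fun x hx =>
    ⟨⟨hs0.trans hx.1.le, hx.2⟩, ne_of_gt hx.1⟩
  have htend : Tendsto (slope h s0) (𝓝[Ioc s0 b] s0) (𝓝 d) :=
    (hasDerivWithinAt_iff_tendsto_slope.mp hd).mono_left (nhdsWithin_mono _ hsub)
  haveI : (𝓝[Ioc s0 b] s0).NeBot := by
    apply mem_closure_iff_nhdsWithin_neBot.mp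
    rw [closure_Ioc hlt.ne]
    exact ⟨le_rfl, hlt.le⟩
  refine ge_of_tendsto htend ?_
  filter_upwards [self_mem_nhdsWithin] with x hx
  rw [slope_def_field]
  apply div_nonneg
  · exact sub_nonneg.mpr (hmin x ⟨hs0.trans hx.1.le, hx.2⟩)
  · exact sub_nonneg.mpr hx.1.le

/-- At a minimum over `[0,b]`, the left-sided derivative is nonpositive. -/
lemma left_deriv_nonpos' {h : ℝ → ℝ} {b s0 d : ℝ} (hs0 : 0 < s0) (hle : s0 ≤ b)
    (hd : HasDerivWithinAt h d (Icc 0 b) s0)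
    (hmin : ∀ s ∈ Icc (0:ℝ) b, h s0 ≤ h s) : d ≤ 0 := by
  have hsub : Ico 0 s0 ⊆ Icc 0 b \ {s0} := fun x hx =>
    ⟨⟨hx.1, hx.2.le.trans hle⟩, ne_of_lt hx.2⟩
  have htend : Tendsto (slope h s0) (𝓝[Ico 0 s0] s0) (𝓝 d) :=
    (hasDerivWithinAt_iff_tendsto_slope.mp hd).mono_left (nhdsWithin_mono _ hsub)
  haveI : (𝓝[Ico 0 s0] s0).NeBot := by
    apply mem_closure_iff_nhdsWithin_neBot.mp
    rw [closure_Ico hs0.ne]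
    exact ⟨hs0.le, le_rfl⟩
  refine le_of_tendsto htend ?_
  filter_upwards [self_mem_nhdsWithin] with x hx
  rw [slope_def_field]
  apply div_nonpos_of_nonneg_of_nonpos
  · exact sub_nonneg.mpr (hmin x ⟨hx.1, hx.2.le.trans hle⟩)
  · exact sub_nonpos.mpr hx.2.le

/-- If `h` attains its minimum over `[0,B]` at `sb`, `h(B) = h(0)` and the (within-)derivative
`d` of `h` satisfies `d(0) = d(B)`, then `d(sb) = 0`. -/
lemma extremum_deriv_zero {h : ℝ → ℝ} {B : ℝ} (hB : 0 < B) (d : ℝ → ℝ)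
    (hd : ∀ s ∈ Icc (0:ℝ) B, HasDerivWithinAt h (d s) (Icc 0 B) s)
    (hper : h B = h 0) (hdper : d 0 = d B)
    {sb : ℝ} (hsb : sb ∈ Icc (0:ℝ) B)
    (hmin : ∀ s ∈ Icc (0:ℝ) B, h sb ≤ h s) : d sb = 0 := by
  rcases eq_or_lt_of_le hsb.1 with h0 | h0
  · -- sb = 0
    have hge : 0 ≤ d sb := right_deriv_nonneg' hsb.1 (h0 ▸ hB) (hd sb hsb) hmin
    have hminB : ∀ s ∈ Icc (0:ℝ) B, h B ≤ h s := by
      intro s hs; rw [hper, h0]; exact hmin s hs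
    have hle : d B ≤ 0 := left_deriv_nonpos' hB le_rfl (hd B ⟨hB.le, le_rfl⟩) hminB
    have heqd : d sb = d B := by rw [← h0, hdper]
    linarith
  rcases eq_or_lt_of_le hsb.2 with h2 | h2
  · -- sb = B
    have hle : d sb ≤ 0 := left_deriv_nonpos' (h2 ▸ hB) hsb.2 (hd sb hsb) hmin
    have hmin0 : ∀ s ∈ Icc (0:ℝ) B, h 0 ≤ h s := by
      intro s hs; rw [← hper, ← h2]; exact hmin s hs
    have hge : 0 ≤ d 0 := right_deriv_nonneg' le_rfl hB (hd 0 ⟨le_rfl, hB.le⟩) hmin0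
    have heqd : d sb = d 0 := by rw [h2, ← hdper]
    linarith
  · exact le_antisymm (left_deriv_nonpos' h0 hsb.2 (hd sb hsb) hmin)
      (right_deriv_nonneg' hsb.1 h2 (hd sb hsb) hmin)

/-- The determinant-one identity `f(s)² · g'(s) = 1` for a polar decomposition
`M e^{is} = f(s) e^{i g(s)}`. -/
lemma slice_key {M : Matrix (Fin 2) (Fin 2) ℝ} (hdet : M.det = 1)
    {f g : ℝ → ℝ} (hf : DifferentiableOn ℝ f (Icc 0 (2*π)))
    (hg : DifferentiableOn ℝ g (Icc 0 (2*π)))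
    (heq : ∀ s ∈ Icc (0:ℝ) (2*π), M *ᵥ expVec s = f s • expVec (g s))
    {s0 : ℝ} (hs0 : s0 ∈ Icc (0:ℝ) (2*π)) :
    (f s0)^2 * derivWithin g (Icc 0 (2*π)) s0 = 1 := by
  have hu : UniqueDiffWithinAt ℝ (Icc (0:ℝ) (2*π)) s0 := (uniqueDiffOn_Icc Real.two_pi_pos) s0 hs0
  set a := M 0 0 with ha
  set b := M 0 1 with hb
  set c := M 1 0 with hc
  set d := M 1 1 with hdd
  have e1 : ∀ s ∈ Icc (0:ℝ) (2*π), a * Real.cos s + b * Real.sin s = f s * Real.cos (g s) := by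
    intro s hs
    have h := congrFun (heq s hs) 0
    simpa [expVec, Matrix.mulVec, dotProduct, Fin.sum_univ_two] using h
  have e2 : ∀ s ∈ Icc (0:ℝ) (2*π), c * Real.cos s + d * Real.sin s = f s * Real.sin (g s) := by
    intro s hs
    have h := congrFun (heq s hs) 1
    simpa [expVec, Matrix.mulVec, dotProduct, Fin.sum_univ_two] using h
  set f' := derivWithin f (Icc (0:ℝ) (2*π)) s0 with hf'
  set g' := derivWithin g (Icc (0:ℝ) (2*π)) s0 with hg'
  have hfd : HasDerivWithinAt f f' (Icc (0:ℝ) (2*π)) s0 := (hf s0 hs0).hasDerivWithinAt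
  have hgd : HasDerivWithinAt g g' (Icc (0:ℝ) (2*π)) s0 := (hg s0 hs0).hasDerivWithinAt
  have hR1 : HasDerivWithinAt (fun s => f s * Real.cos (g s))
      (f' * Real.cos (g s0) + f s0 * (-Real.sin (g s0) * g')) (Icc (0:ℝ) (2*π)) s0 :=
    hfd.mul ((Real.hasDerivAt_cos (g s0)).comp_hasDerivWithinAt s0 hgd)
  have hR2 : HasDerivWithinAt (fun s => f s * Real.sin (g s))
      (f' * Real.sin (g s0) + f s0 * (Real.cos (g s0) * g')) (Icc (0:ℝ) (2*π)) s0 :=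
    hfd.mul ((Real.hasDerivAt_sin (g s0)).comp_hasDerivWithinAt s0 hgd)
  have hL1 : HasDerivWithinAt (fun s => a * Real.cos s + b * Real.sin s)
      (a * (-Real.sin s0) + b * Real.cos s0) (Icc (0:ℝ) (2*π)) s0 :=
    (((Real.hasDerivAt_cos s0).const_mul a).add
      ((Real.hasDerivAt_sin s0).const_mul b)).hasDerivWithinAt
  have hL2 : HasDerivWithinAt (fun s => c * Real.cos s + d * Real.sin s)
      (c * (-Real.sin s0) + d * Real.cos s0) (Icc (0:ℝ) (2*π)) s0 :=
    (((Real.hasDerivAt_cos s0).const_mul c).add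
      ((Real.hasDerivAt_sin s0).const_mul d)).hasDerivWithinAt
  have key1 : a * (-Real.sin s0) + b * Real.cos s0
      = f' * Real.cos (g s0) + f s0 * (-Real.sin (g s0) * g') :=
    (hL1.derivWithin hu).symm.trans ((hR1.congr (fun y hy => e1 y hy) (e1 s0 hs0)).derivWithin hu)
  have key2 : c * (-Real.sin s0) + d * Real.cos s0
      = f' * Real.sin (g s0) + f s0 * (Real.cos (g s0) * g') :=
    (hL2.derivWithin hu).symm.trans ((hR2.congr (fun y hy => e2 y hy) (e2 s0 hs0)).derivWithin hu)
  have hdet' : a * d - b * c = 1 := by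
    rw [Matrix.det_fin_two] at hdet; linarith [hdet]
  have hpy : Real.sin s0 ^ 2 + Real.cos s0 ^ 2 = 1 := Real.sin_sq_add_cos_sq s0
  have hpy2 : Real.sin (g s0) ^ 2 + Real.cos (g s0) ^ 2 = 1 := Real.sin_sq_add_cos_sq (g s0)
  have v1 := e1 s0 hs0
  have v2 := e2 s0 hs0
  have p1 : (a * Real.cos s0 + b * Real.sin s0) * (c * (-Real.sin s0) + d * Real.cos s0)
      = (f s0 * Real.cos (g s0)) * (f' * Real.sin (g s0) + f s0 * (Real.cos (g s0) * g')) := by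
    rw [v1, key2]
  have p2 : (c * Real.cos s0 + d * Real.sin s0) * (a * (-Real.sin s0) + b * Real.cos s0)
      = (f s0 * Real.sin (g s0)) * (f' * Real.cos (g s0) + f s0 * (-Real.sin (g s0) * g')) := by
    rw [v2, key1]
  linear_combination (p2 - p1) - (f s0 ^ 2 * g') * hpy2 + (a * d - b * c) * hpy + hdet'

/-- If `Δ` attains its minimum (or maximum) over `[0,2π]` at `s̄` and `Δ(s̄) ∈ ℤ`, then
`φ(1)·e^{is̄} = e^{is̄}`; in particular `r(1,s̄) = 1` and `e^{is̄}` is an eigenvector of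
`φ(1)` with eigenvalue `1`. -/
theorem extremal_integer_winding_gives_eigenvector
    (φ : ℝ → Matrix (Fin 2) (Fin 2) ℝ)
    (hφsmooth : ∀ i j, ContDiffOn ℝ (⊤ : ℕ∞) (fun t => φ t i j) (Icc (0:ℝ) 1))
    (hφdet : ∀ t ∈ Icc (0:ℝ) 1, (φ t).det = 1)
    (hφ0 : φ 0 = 1)
    (r θ : ℝ → ℝ → ℝ)
    (hrsmooth : ContDiffOn ℝ (⊤ : ℕ∞) (fun p : ℝ × ℝ => r p.1 p.2) (Icc (0:ℝ) 1 ×ˢ Icc (0:ℝ) (2 * π)))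
    (hθsmooth : ContDiffOn ℝ (⊤ : ℕ∞) (fun p : ℝ × ℝ => θ p.1 p.2) (Icc (0:ℝ) 1 ×ˢ Icc (0:ℝ) (2 * π)))
    (hlift : IsPolarLift φ r θ)
    (sbar : ℝ) (hsbar : sbar ∈ Icc (0:ℝ) (2 * π))
    (hext : (∀ s ∈ Icc (0:ℝ) (2 * π), windingDelta θ sbar ≤ windingDelta θ s) ∨
            (∀ s ∈ Icc (0:ℝ) (2 * π), windingDelta θ s ≤ windingDelta θ sbar))
    (hint : ∃ m : ℤ, windingDelta θ sbar = (m : ℝ)) :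
    φ 1 *ᵥ expVec sbar = expVec sbar ∧ r 1 sbar = 1 := by
  obtain ⟨hl1, hl2⟩ := hlift
  have h2π : (0:ℝ) < 2 * π := Real.two_pi_pos
  have h1mem : (1:ℝ) ∈ Icc (0:ℝ) 1 := ⟨zero_le_one, le_rfl⟩
  have h0mem : (0:ℝ) ∈ Icc (0:ℝ) 1 := ⟨le_rfl, zero_le_one⟩
  have hm0 : (0:ℝ) ∈ Icc (0:ℝ) (2*π) := ⟨le_rfl, h2π.le⟩
  have hm2 : (2*π) ∈ Icc (0:ℝ) (2*π) := ⟨h2π.le, le_rfl⟩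
  have hexpeq : expVec (2*π) = expVec 0 := by
    unfold expVec
    rw [Real.cos_two_pi, Real.sin_two_pi, Real.cos_zero, Real.sin_zero]
  -- smoothness of the slices at t = 1
  have hcurve : DifferentiableOn ℝ (fun s : ℝ => ((1:ℝ), s)) (Icc (0:ℝ) (2*π)) :=
    ((differentiable_const _).prodMk differentiable_id).differentiableOn
  have hmap : MapsTo (fun s : ℝ => ((1:ℝ), s)) (Icc (0:ℝ) (2*π))
      (Icc (0:ℝ) 1 ×ˢ Icc (0:ℝ) (2*π)) := fun s hs => ⟨h1mem, hs⟩
  have hfD : DifferentiableOn ℝ (fun s => r 1 s) (Icc (0:ℝ) (2*π)) :=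
    (hrsmooth.differentiableOn (by simp)).comp hcurve hmap
  have hgD : DifferentiableOn ℝ (fun s => θ 1 s) (Icc (0:ℝ) (2*π)) :=
    (hθsmooth.differentiableOn (by simp)).comp hcurve hmap
  have hfpos : ∀ s ∈ Icc (0:ℝ) (2*π), 0 < r 1 s := fun s hs => (hl1 1 h1mem s hs).1
  have hsl : ∀ s ∈ Icc (0:ℝ) (2*π), φ 1 *ᵥ expVec s = r 1 s • expVec (θ 1 s) :=
    fun s hs => (hl1 1 h1mem s hs).2
  have key : ∀ s ∈ Icc (0:ℝ) (2*π),
      (r 1 s)^2 * derivWithin (fun s => θ 1 s) (Icc 0 (2*π)) s = 1 :=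
    fun s hs => slice_key (hφdet 1 h1mem) hfD hgD hsl hs
  -- wrap-around facts
  have wrap : ∀ t ∈ Icc (0:ℝ) 1,
      r t 0 = r t (2*π) ∧ ∃ n : ℤ, (n:ℝ) * (2*π) = θ t (2*π) - θ t 0 := by
    intro t ht
    have h0 := hl1 t ht 0 hm0
    have h2 := hl1 t ht (2*π) hm2
    have hcomb : r t 0 • expVec (θ t 0) = r t (2*π) • expVec (θ t (2*π)) := by
      rw [← h0.2, ← h2.2, hexpeq]
    have c0 : r t 0 * Real.cos (θ t 0) = r t (2*π) * Real.cos (θ t (2*π)) := by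
      have := congrFun hcomb 0
      simpa [expVec] using this
    have c1 : r t 0 * Real.sin (θ t 0) = r t (2*π) * Real.sin (θ t (2*π)) := by
      have := congrFun hcomb 1
      simpa [expVec] using this
    have hpy0 := Real.sin_sq_add_cos_sq (θ t 0)
    have hpy2' := Real.sin_sq_add_cos_sq (θ t (2*π))
    have hzero : (r t 0 - r t (2*π)) * (r t 0 + r t (2*π)) = 0 := by
      linear_combination (r t 0 * Real.cos (θ t 0) + r t (2*π) * Real.cos (θ t (2*π))) * c0
        + (r t 0 * Real.sin (θ t 0) + r t (2*π) * Real.sin (θ t (2*π))) * c1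
        - (r t 0)^2 * hpy0 + (r t (2*π))^2 * hpy2'
    have hreq : r t 0 = r t (2*π) := by
      rcases mul_eq_zero.mp hzero with h | h
      · linarith
      · linarith [h0.1, h2.1]
    refine ⟨hreq, ?_⟩
    have hC : Real.cos (θ t 0) = Real.cos (θ t (2*π)) := by
      apply mul_left_cancel₀ (ne_of_gt h0.1)
      rw [c0, hreq]
    have hS : Real.sin (θ t 0) = Real.sin (θ t (2*π)) := by
      apply mul_left_cancel₀ (ne_of_gt h0.1)
      rw [c1, hreq]
    have hcos1 : Real.cos (θ t (2*π) - θ t 0) = 1 := by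
      rw [Real.cos_sub, ← hC, ← hS]
      linear_combination Real.sin_sq_add_cos_sq (θ t 0)
    exact (Real.cos_eq_one_iff _).mp hcos1
  -- the integer `θ t 2π - θ t 0` is constantly `2π` by continuity
  have hucont : ContinuousOn (fun t => θ t (2*π) - θ t 0) (Icc (0:ℝ) 1) := by
    have hθc := hθsmooth.continuousOn
    exact (hθc.comp ((continuous_id.prodMk continuous_const).continuousOn)
        (fun t ht => ⟨ht, hm2⟩)).sub
      (hθc.comp ((continuous_id.prodMk continuous_const).continuousOn)
        (fun t ht => ⟨ht, hm0⟩))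
  have hu0 : θ 0 (2*π) - θ 0 0 = 2*π := by
    rw [hl2 0 hm0, hl2 (2*π) hm2]; ring
  have hu1 : θ 1 (2*π) - θ 1 0 = 2*π := by
    obtain ⟨n, hn⟩ := (wrap 1 h1mem).2
    have hπ := Real.pi_pos
    rcases lt_trichotomy n 1 with hlt | heq | hgt
    · exfalso
      have hn0 : (n:ℝ) ≤ 0 := by exact_mod_cast Int.cast_nonpos.mpr (by omega)
      have h1le : θ 1 (2*π) - θ 1 0 ≤ 0 := by nlinarith
      have hsubs := intermediate_value_Icc' (zero_le_one) hucont
      have hmem : π ∈ Icc (θ 1 (2*π) - θ 1 0) (θ 0 (2*π) - θ 0 0) := by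
        rw [hu0]; exact ⟨by linarith, by linarith⟩
      obtain ⟨t, ht, hut⟩ := hsubs hmem
      have hut' : θ t (2*π) - θ t 0 = π := hut
      obtain ⟨k, hk⟩ := (wrap t ht).2
      rw [hut'] at hk
      have : (2*(k:ℝ) - 1) * π = 0 := by linarith
      have h21 : (2*(k:ℝ) - 1) = 0 := by
        rcases mul_eq_zero.mp this with h | h
        · exact h
        · exact absurd h Real.pi_ne_zero
      have : (2*k - 1 : ℤ) = 0 := by exact_mod_cast h21
      omega
    · rw [← hn, heq]; push_cast; ring
    · exfalso
      have hn2 : (2:ℝ) ≤ (n:ℝ) := by exact_mod_cast (by omega : (2:ℤ) ≤ n)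
      have h1ge : 4*π ≤ θ 1 (2*π) - θ 1 0 := by nlinarith
      have hsubs := intermediate_value_Icc (zero_le_one) hucont
      have hmem : 3*π ∈ Icc (θ 0 (2*π) - θ 0 0) (θ 1 (2*π) - θ 1 0) := by
        rw [hu0]; exact ⟨by linarith, by linarith⟩
      obtain ⟨t, ht, hut⟩ := hsubs hmem
      have hut' : θ t (2*π) - θ t 0 = 3*π := hut
      obtain ⟨k, hk⟩ := (wrap t ht).2
      rw [hut'] at hk
      have : (2*(k:ℝ) - 3) * π = 0 := by linarith
      have h21 : (2*(k:ℝ) - 3) = 0 := by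
        rcases mul_eq_zero.mp this with h | h
        · exact h
        · exact absurd h Real.pi_ne_zero
      have : (2*k - 3 : ℤ) = 0 := by exact_mod_cast h21
      omega
  have hreq1 : r 1 0 = r 1 (2*π) := (wrap 1 h1mem).1
  -- the integer condition
  obtain ⟨m, hm⟩ := hint
  have hgs : θ 1 sbar = sbar + m * (2*π) := by
    unfold windingDelta at hm
    have h2πne : (2*π : ℝ) ≠ 0 := ne_of_gt h2π
    field_simp at hm
    linarith
  have hexpg : expVec (θ 1 sbar) = expVec sbar := by
    rw [hgs]
    unfold expVec
    rw [Real.cos_add_int_mul_two_pi, Real.sin_add_int_mul_two_pi]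
  -- reduce to r 1 sbar = 1
  suffices hr1 : r 1 sbar = 1 by
    refine ⟨?_, hr1⟩
    rw [hsl sbar hsbar, hexpg, hr1, one_smul]
  -- the within-derivative of g at sbar equals 1
  set dgf : ℝ → ℝ := fun s => derivWithin (fun s => θ 1 s) (Icc 0 (2*π)) s with hdgf
  have hkey : r 1 sbar ^ 2 * dgf sbar = 1 := key sbar hsbar
  have hdeq : dgf 0 = dgf (2*π) := by
    have k0 := key 0 hm0
    have k2 := key (2*π) hm2
    rw [← hreq1] at k2
    have hne : (r 1 0)^2 ≠ 0 := pow_ne_zero 2 (ne_of_gt (hfpos 0 hm0))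
    exact mul_left_cancel₀ hne (k0.trans k2.symm)
  suffices hdg1 : dgf sbar = 1 by
    rw [hdg1, mul_one] at hkey
    have hp := hfpos sbar hsbar
    have : (r 1 sbar - 1) * (r 1 sbar + 1) = 0 := by linear_combination hkey
    rcases mul_eq_zero.mp this with h | h
    · linarith
    · linarith
  -- derivatives of h(s) = g(s) - s and of -(h)
  have hhd : ∀ s ∈ Icc (0:ℝ) (2*π),
      HasDerivWithinAt (fun s => θ 1 s - s) (dgf s - 1) (Icc 0 (2*π)) s :=
    fun s hs => ((hgD s hs).hasDerivWithinAt).sub (hasDerivWithinAt_id s _)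
  have hhd' : ∀ s ∈ Icc (0:ℝ) (2*π),
      HasDerivWithinAt (fun s => s - θ 1 s) (1 - dgf s) (Icc 0 (2*π)) s :=
    fun s hs => (hasDerivWithinAt_id s _).sub ((hgD s hs).hasDerivWithinAt)
  have hper : θ 1 (2*π) - (2*π) = θ 1 0 - 0 := by linarith
  rcases hext with hmin | hmax
  · have hminh : ∀ s ∈ Icc (0:ℝ) (2*π), θ 1 sbar - sbar ≤ θ 1 s - s := by
      intro s hs
      have := hmin s hs
      unfold windingDelta at this
      exact (div_le_div_iff_of_pos_right h2π).mp this
    have hz := extremum_deriv_zero h2π (fun s => dgf s - 1) hhd hper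
      (by simp [hdeq]) hsbar hminh
    have hz' : dgf sbar - 1 = 0 := hz
    linarith
  · have hmaxh : ∀ s ∈ Icc (0:ℝ) (2*π), sbar - θ 1 sbar ≤ s - θ 1 s := by
      intro s hs
      have := hmax s hs
      unfold windingDelta at this
      have := (div_le_div_iff_of_pos_right h2π).mp this
      linarith
    have hz := extremum_deriv_zero h2π (fun s => 1 - dgf s) hhd'
      (by linarith) (by simp [hdeq]) hsbar hmaxh
    have hz' : 1 - dgf sbar = 0 := hz
    linarith
end
end

section
/- Let S:[0,1]→{symmetric 2×2 real matrices} be smooth, let φ be the solution of −J·φ' − S·φ = 0 with φ(0)=I, and fix a polar lift of φ with associated function Δ. Let ν ∈ ℝ and let v:[0,1]→ℝ²∖{0} be C¹ with v(1)=v(0) and −J·v'(t) − S(t)·v(t) = ν·v(t) for all t ∈ [0,1], and let ϑ be a continuous argument of v. If ν > 0 then (ϑ(1)−ϑ(0))/(2π) > inf Δ, and if ν < 0 then (ϑ(1)−ϑ(0))/(2π) < sup Δ. -/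
open Real Set Matrix

noncomputable section

/-- The matrix `J = [[0,-1],[1,0]]`, i.e. multiplication by `i` under `ℝ² ≅ ℂ`. -/
def Jmat : Matrix (Fin 2) (Fin 2) ℝ := !![0, -1; 1, 0]

/-- The Euclidean norm of a vector in `ℝ²`. -/
def norm2 (w : Fin 2 → ℝ) : ℝ := Real.sqrt (w 0 ^ 2 + w 1 ^ 2)

/-! ### Auxiliary lemmas -/

lemma cosLip' (a b : ℝ) : |Real.cos a - Real.cos b| ≤ |a - b| := by
  rw [Real.cos_sub_cos]
  have h1 := Real.abs_sin_le_one ((a+b)/2)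
  have h2 : |Real.sin ((a-b)/2)| ≤ |(a-b)/2| := Real.abs_sin_le_abs
  have h3 : |(a-b)/2| = |a-b|/2 := by rw [abs_div, abs_two]
  have h4 : |(-2) * Real.sin ((a+b)/2) * Real.sin ((a-b)/2)|
      = 2 * |Real.sin ((a+b)/2)| * |Real.sin ((a-b)/2)| := by
    rw [abs_mul, abs_mul]; norm_num
  rw [h4]
  nlinarith [abs_nonneg (Real.sin ((a-b)/2)), abs_nonneg (Real.sin ((a+b)/2)), abs_nonneg (a-b)]

lemma sinLip' (a b : ℝ) : |Real.sin a - Real.sin b| ≤ |a - b| := by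
  rw [Real.sin_sub_sin]
  have h1 := Real.abs_cos_le_one ((a+b)/2)
  have h2 : |Real.sin ((a-b)/2)| ≤ |(a-b)/2| := Real.abs_sin_le_abs
  have h3 : |(a-b)/2| = |a-b|/2 := by rw [abs_div, abs_two]
  have h4 : |2 * Real.sin ((a-b)/2) * Real.cos ((a+b)/2)|
      = 2 * |Real.sin ((a-b)/2)| * |Real.cos ((a+b)/2)| := by
    rw [abs_mul, abs_mul]; norm_num
  rw [h4]
  nlinarith [abs_nonneg (Real.sin ((a-b)/2)), abs_nonneg (Real.cos ((a+b)/2)), abs_nonneg (a-b)]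

/-- The quadratic form `⟨S(t)·e^{iα}, e^{iα}⟩`. -/
def qfun (S : ℝ → Matrix (Fin 2) (Fin 2) ℝ) (t α : ℝ) : ℝ :=
  S t 0 0 * Real.cos α ^ 2 + (S t 0 1 + S t 1 0) * Real.cos α * Real.sin α
    + S t 1 1 * Real.sin α ^ 2

lemma qfun_lip (S : ℝ → Matrix (Fin 2) (Fin 2) ℝ) (t a b : ℝ) :
    |qfun S t a - qfun S t b|
      ≤ 2 * (|S t 0 0| + |S t 0 1| + |S t 1 0| + |S t 1 1|) * |a - b| := by
  set A := S t 0 0; set B := S t 0 1; set C := S t 1 0; set D := S t 1 1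
  have e1 : |Real.cos a ^ 2 - Real.cos b ^ 2| ≤ 2 * |a - b| := by
    have h : Real.cos a ^ 2 - Real.cos b ^ 2
        = (Real.cos a - Real.cos b) * (Real.cos a + Real.cos b) := by ring
    rw [h, abs_mul]
    have h1 := cosLip' a b
    have h2 : |Real.cos a + Real.cos b| ≤ 2 := by
      calc |Real.cos a + Real.cos b| ≤ |Real.cos a| + |Real.cos b| := abs_add_le _ _
        _ ≤ 2 := by linarith [Real.abs_cos_le_one a, Real.abs_cos_le_one b]
    nlinarith [abs_nonneg (Real.cos a - Real.cos b), abs_nonneg (a - b)]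
  have e3 : |Real.sin a ^ 2 - Real.sin b ^ 2| ≤ 2 * |a - b| := by
    have h : Real.sin a ^ 2 - Real.sin b ^ 2
        = (Real.sin a - Real.sin b) * (Real.sin a + Real.sin b) := by ring
    rw [h, abs_mul]
    have h1 := sinLip' a b
    have h2 : |Real.sin a + Real.sin b| ≤ 2 := by
      calc |Real.sin a + Real.sin b| ≤ |Real.sin a| + |Real.sin b| := abs_add_le _ _
        _ ≤ 2 := by linarith [Real.abs_sin_le_one a, Real.abs_sin_le_one b]
    nlinarith [abs_nonneg (Real.sin a - Real.sin b), abs_nonneg (a - b)]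
  have e2 : |Real.cos a * Real.sin a - Real.cos b * Real.sin b| ≤ 2 * |a - b| := by
    have h : Real.cos a * Real.sin a - Real.cos b * Real.sin b
        = Real.cos a * (Real.sin a - Real.sin b) + Real.sin b * (Real.cos a - Real.cos b) := by
      ring
    rw [h]
    calc |Real.cos a * (Real.sin a - Real.sin b) + Real.sin b * (Real.cos a - Real.cos b)|
        ≤ |Real.cos a * (Real.sin a - Real.sin b)| + |Real.sin b * (Real.cos a - Real.cos b)| :=
          abs_add_le _ _
      _ = |Real.cos a| * |Real.sin a - Real.sin b| + |Real.sin b| * |Real.cos a - Real.cos b| := by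
          rw [abs_mul, abs_mul]
      _ ≤ 2 * |a - b| := by
          nlinarith [Real.abs_cos_le_one a, Real.abs_sin_le_one b, sinLip' a b, cosLip' a b,
            abs_nonneg (Real.sin a - Real.sin b), abs_nonneg (Real.cos a - Real.cos b),
            abs_nonneg (a - b)]
  have hdecomp : qfun S t a - qfun S t b
      = A * (Real.cos a ^ 2 - Real.cos b ^ 2)
        + ((B + C) * (Real.cos a * Real.sin a - Real.cos b * Real.sin b)
        + D * (Real.sin a ^ 2 - Real.sin b ^ 2)) := by
    simp only [qfun]; ring
  rw [hdecomp]
  calc |A * (Real.cos a ^ 2 - Real.cos b ^ 2)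
        + ((B + C) * (Real.cos a * Real.sin a - Real.cos b * Real.sin b)
        + D * (Real.sin a ^ 2 - Real.sin b ^ 2))|
      ≤ |A * (Real.cos a ^ 2 - Real.cos b ^ 2)|
        + (|(B + C) * (Real.cos a * Real.sin a - Real.cos b * Real.sin b)|
        + |D * (Real.sin a ^ 2 - Real.sin b ^ 2)|) :=
        (abs_add_le _ _).trans (by linarith [abs_add_le ((B + C) * (Real.cos a * Real.sin a - Real.cos b * Real.sin b)) (D * (Real.sin a ^ 2 - Real.sin b ^ 2))])
    _ = |A| * |Real.cos a ^ 2 - Real.cos b ^ 2|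
        + (|B + C| * |Real.cos a * Real.sin a - Real.cos b * Real.sin b|
        + |D| * |Real.sin a ^ 2 - Real.sin b ^ 2|) := by rw [abs_mul, abs_mul, abs_mul]
    _ ≤ 2 * (|A| + |B| + |C| + |D|) * |a - b| := by
        have hBC : |B + C| ≤ |B| + |C| := abs_add_le _ _
        nlinarith [mul_le_mul_of_nonneg_left e1 (abs_nonneg A),
          mul_le_mul_of_nonneg_left e2 (abs_nonneg (B + C)),
          mul_le_mul_of_nonneg_left e3 (abs_nonneg D),
          mul_le_mul_of_nonneg_right hBC (abs_nonneg (Real.cos a * Real.sin a - Real.cos b * Real.sin b)),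
          abs_nonneg (a - b), abs_nonneg B, abs_nonneg C,
          abs_nonneg (Real.cos a * Real.sin a - Real.cos b * Real.sin b)]

/-- Differentiability of a continuous argument of a differentiable nonvanishing planar path. -/
lemma hasDerivWithinAt_arg' {s : Set ℝ} (w0 w1 : ℝ → ℝ) (wd0 wd1 : ℝ) (ϑ : ℝ → ℝ)
    (t : ℝ) (ht : t ∈ s)
    (hw0 : HasDerivWithinAt w0 wd0 s t)
    (hw1 : HasDerivWithinAt w1 wd1 s t)
    (hpos : ∀ τ ∈ s, 0 < (w0 τ)^2 + (w1 τ)^2)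
    (hϑ : ContinuousWithinAt ϑ s t)
    (harg : ∀ τ ∈ s, w0 τ = Real.sqrt ((w0 τ)^2+(w1 τ)^2) * Real.cos (ϑ τ) ∧
            w1 τ = Real.sqrt ((w0 τ)^2+(w1 τ)^2) * Real.sin (ϑ τ)) :
    HasDerivWithinAt ϑ ((w0 t * wd1 - w1 t * wd0) / ((w0 t)^2 + (w1 t)^2)) s t := by
  set c := Real.cos (ϑ t) with hc
  set sn := Real.sin (ϑ t) with hsn
  set F0 : ℝ → ℝ := fun τ => w0 τ * c + w1 τ * sn with hF0
  set F1 : ℝ → ℝ := fun τ => -(w0 τ) * sn + w1 τ * c with hF1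
  set G : ℝ → ℝ := fun τ => ϑ t + Real.arctan (F1 τ / F0 τ) with hG
  have hcs : sn ^ 2 + c ^ 2 = 1 := Real.sin_sq_add_cos_sq (ϑ t)
  have key : ∀ τ ∈ s, |ϑ τ - ϑ t| < π/2 → G τ = ϑ τ ∧ 0 < F0 τ := by
    intro τ hτ hδ
    obtain ⟨h0, h1⟩ := harg τ hτ
    set ρ := Real.sqrt ((w0 τ)^2+(w1 τ)^2) with hρ
    have hρpos : 0 < ρ := Real.sqrt_pos.2 (hpos τ hτ)
    set δ := ϑ τ - ϑ t with hδdef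
    have hF0τ : F0 τ = ρ * Real.cos δ := by
      rw [hF0]; simp only [h0, h1, hδdef, Real.cos_sub, hc, hsn]; ring
    have hF1τ : F1 τ = ρ * Real.sin δ := by
      rw [hF1]; simp only [h0, h1, hδdef, Real.sin_sub, hc, hsn]; ring
    have hδmem : δ ∈ Ioo (-(π/2)) (π/2) := abs_lt.1 hδ
    have hcosδ : 0 < Real.cos δ := Real.cos_pos_of_mem_Ioo hδmem
    have hF0pos : 0 < F0 τ := by rw [hF0τ]; positivity
    refine ⟨?_, hF0pos⟩
    have : F1 τ / F0 τ = Real.tan δ := by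
      rw [hF0τ, hF1τ, Real.tan_eq_sin_div_cos]
      field_simp
    rw [hG]
    simp only [this]; rw [Real.arctan_tan hδmem.1 hδmem.2, hδdef]
    ring
  have hev : ∀ᶠ τ in nhdsWithin t s, |ϑ τ - ϑ t| < π/2 := by
    have : Ioo (ϑ t - π/2) (ϑ t + π/2) ∈ nhds (ϑ t) := by
      apply Ioo_mem_nhds <;> linarith [Real.pi_pos]
    filter_upwards [hϑ this] with τ hτ
    simp only [mem_preimage, mem_Ioo] at hτ
    rw [abs_lt]; constructor <;> linarith [hτ.1, hτ.2]
  have hevs : ∀ᶠ τ in nhdsWithin t s, τ ∈ s := self_mem_nhdsWithin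
  have heq : ϑ =ᶠ[nhdsWithin t s] G := by
    filter_upwards [hev, hevs] with τ h1 h2
    exact ((key τ h2 h1).1).symm
  have hGt : G t = ϑ t ∧ 0 < F0 t :=
    key t ht (by rw [sub_self, abs_zero]; linarith [Real.pi_pos])
  have hF0d : HasDerivWithinAt F0 (wd0 * c + wd1 * sn) s t :=
    (hw0.mul_const c).add (hw1.mul_const sn)
  have hF1d : HasDerivWithinAt F1 (-wd0 * sn + wd1 * c) s t :=
    ((hw0.neg).mul_const sn).add (hw1.mul_const c)
  have hF0ne : F0 t ≠ 0 := ne_of_gt hGt.2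
  have hdiv : HasDerivWithinAt (fun τ => F1 τ / F0 τ)
      (((-wd0 * sn + wd1 * c) * F0 t - F1 t * (wd0 * c + wd1 * sn)) / (F0 t)^2) s t :=
    hF1d.div hF0d hF0ne
  have harctan : HasDerivAt Real.arctan (1 / (1 + (F1 t / F0 t)^2)) (F1 t / F0 t) :=
    Real.hasDerivAt_arctan _
  have hGd : HasDerivWithinAt G
      ((1 / (1 + (F1 t / F0 t)^2)) * (((-wd0 * sn + wd1 * c) * F0 t - F1 t * (wd0 * c + wd1 * sn)) / (F0 t)^2)) s t := by
    exact (harctan.comp_hasDerivWithinAt t hdiv).const_add (ϑ t)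
  have hval : (1 / (1 + (F1 t / F0 t)^2)) * (((-wd0 * sn + wd1 * c) * F0 t - F1 t * (wd0 * c + wd1 * sn)) / (F0 t)^2)
      = (w0 t * wd1 - w1 t * wd0) / ((w0 t)^2 + (w1 t)^2) := by
    have hsum : F0 t^2 + F1 t^2 = (w0 t)^2 + (w1 t)^2 := by
      simp only [hF0, hF1]; linear_combination ((w0 t)^2 + (w1 t)^2) * hcs
    have hnum : (-wd0 * sn + wd1 * c) * F0 t - F1 t * (wd0 * c + wd1 * sn)
        = w0 t * wd1 - w1 t * wd0 := by
      simp only [hF0, hF1]; linear_combination (w0 t * wd1 - w1 t * wd0) * hcs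
    rw [div_mul_div_comm, one_mul, hnum]
    congr 1
    have : (1 + (F1 t / F0 t)^2) * F0 t ^2 = F0 t^2 + F1 t^2 := by
      field_simp
    rw [this, hsum]
  rw [hval] at hGd
  exact hGd.congr_of_eventuallyEq heq hGt.1.symm

/-- Strict comparison: if `g(0)=0` and `g' ≥ ν - L|g|` with `ν > 0` then `g(1) > 0`. -/
lemma comparison_pos' {g gd : ℝ → ℝ} {L ν : ℝ} (hL : 0 < L) (hν : 0 < ν)
    (hg : ∀ t ∈ Icc (0:ℝ) 1, HasDerivWithinAt g (gd t) (Icc (0:ℝ) 1) t)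
    (hg0 : g 0 = 0)
    (hineq : ∀ t ∈ Icc (0:ℝ) 1, ν - L * |g t| ≤ gd t) :
    0 < g 1 := by
  have gcont : ContinuousOn g (Icc (0:ℝ) 1) := fun t ht => (hg t ht).continuousWithinAt
  have hnonneg : ∀ t ∈ Icc (0:ℝ) 1, 0 ≤ g t := by
    by_contra hcon
    push_neg at hcon
    obtain ⟨t1, ht1, hgt1⟩ := hcon
    have hKclosed : IsClosed {t | t ∈ Icc (0:ℝ) t1 ∧ g t = 0} := by
      have : {t | t ∈ Icc (0:ℝ) t1 ∧ g t = 0} = Icc (0:ℝ) t1 ∩ g ⁻¹' {0} := by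
        ext x; simp [and_comm]
      rw [this]
      exact (gcont.mono (Icc_subset_Icc le_rfl ht1.2)).preimage_isClosed_of_isClosed
        isClosed_Icc isClosed_singleton
    have hK0 : (0:ℝ) ∈ {t | t ∈ Icc (0:ℝ) t1 ∧ g t = 0} := ⟨⟨le_rfl, ht1.1⟩, hg0⟩
    have hKbdd : BddAbove {t | t ∈ Icc (0:ℝ) t1 ∧ g t = 0} := ⟨t1, fun x hx => hx.1.2⟩
    obtain ⟨t0, ht0K, ht0ub⟩ : ∃ t0, t0 ∈ {t | t ∈ Icc (0:ℝ) t1 ∧ g t = 0} ∧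
        ∀ x ∈ {t | t ∈ Icc (0:ℝ) t1 ∧ g t = 0}, x ≤ t0 :=
      ⟨sSup _, hKclosed.csSup_mem ⟨0, hK0⟩ hKbdd, fun x hx => le_csSup hKbdd hx⟩
    have ht0le : t0 ≤ t1 := ht0K.1.2
    have ht00 : (0:ℝ) ≤ t0 := ht0K.1.1
    have ht0lt : t0 < t1 := lt_of_le_of_ne ht0le (by rintro rfl; exact absurd ht0K.2 (ne_of_lt hgt1))
    have hneg : ∀ τ ∈ Ioc t0 t1, g τ < 0 := by
      intro τ hτ
      rcases lt_trichotomy (g τ) 0 with h | h | h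
      · exact h
      · exact absurd (ht0ub τ ⟨⟨le_trans ht00 hτ.1.le, hτ.2⟩, h⟩) (not_le.2 hτ.1)
      · have hsub : Icc τ t1 ⊆ Icc (0:ℝ) 1 :=
          Icc_subset_Icc (le_trans ht00 hτ.1.le) ht1.2
        obtain ⟨σ, hσ, hσ0⟩ := intermediate_value_Icc' hτ.2 (gcont.mono hsub)
          (⟨hgt1.le, h.le⟩ : (0:ℝ) ∈ Icc (g t1) (g τ))
        have : τ ≤ t0 := le_trans hσ.1 (ht0ub σ ⟨⟨le_trans ht00 (le_trans hτ.1.le hσ.1), hσ.2⟩, hσ0⟩)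
        exact absurd this (not_le.2 hτ.1)
    have hmono : StrictMonoOn (fun τ => g τ * Real.exp (-L * τ)) (Icc t0 t1) := by
      apply strictMonoOn_of_hasDerivWithinAt_pos (convex_Icc t0 t1)
        (f' := fun τ => (gd τ - L * g τ) * Real.exp (-L * τ))
      · exact (gcont.mono (Icc_subset_Icc ht00 ht1.2)).mul
          (Real.continuous_exp.comp (continuous_const.mul continuous_id)).continuousOn
      · intro x hx
        rw [interior_Icc] at hx
        have hxI : x ∈ Icc (0:ℝ) 1 := ⟨le_trans ht00 hx.1.le, le_trans hx.2.le ht1.2⟩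
        have hgx : HasDerivWithinAt g (gd x) (interior (Icc t0 t1)) x := by
          rw [interior_Icc]
          exact (hg x hxI).mono (fun y hy => ⟨le_trans ht00 hy.1.le, le_trans hy.2.le ht1.2⟩)
        have hex : HasDerivAt (fun τ => Real.exp (-L * τ)) (Real.exp (-L * x) * (-L * 1)) x :=
          ((hasDerivAt_id x).const_mul (-L)).exp
        exact (hgx.mul hex.hasDerivWithinAt).congr_deriv (by ring)
      · intro x hx
        rw [interior_Icc] at hx
        have hxI : x ∈ Icc (0:ℝ) 1 := ⟨le_trans ht00 hx.1.le, le_trans hx.2.le ht1.2⟩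
        have hgneg : g x < 0 := hneg x ⟨hx.1, hx.2.le⟩
        have habs : |g x| = -g x := abs_of_neg hgneg
        have := hineq x hxI
        rw [habs] at this
        have hpos : 0 < gd x - L * g x := by nlinarith
        positivity
    have h1 : g t0 * Real.exp (-L * t0) < g t1 * Real.exp (-L * t1) :=
      hmono ⟨le_rfl, ht0le⟩ ⟨ht0le, le_rfl⟩ ht0lt
    rw [ht0K.2, zero_mul] at h1
    nlinarith [Real.exp_pos (-L * t1)]
  have hmono2 : MonotoneOn (fun τ => (g τ - ν / L) * Real.exp (L * τ)) (Icc (0:ℝ) 1) := by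
    apply monotoneOn_of_hasDerivWithinAt_nonneg (convex_Icc (0:ℝ) 1)
      (f' := fun τ => (gd τ + L * g τ - ν) * Real.exp (L * τ))
    · exact (gcont.sub continuousOn_const).mul
        (Real.continuous_exp.comp (continuous_const.mul continuous_id)).continuousOn
    · intro x hx
      rw [interior_Icc] at hx
      have hxI : x ∈ Icc (0:ℝ) 1 := ⟨hx.1.le, hx.2.le⟩
      have hgx : HasDerivWithinAt (fun τ => g τ - ν / L) (gd x) (interior (Icc (0:ℝ) 1)) x := by
        rw [interior_Icc]
        exact ((hg x hxI).mono Ioo_subset_Icc_self).sub_const _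
      have hex : HasDerivAt (fun τ => Real.exp (L * τ)) (Real.exp (L * x) * (L * 1)) x :=
        ((hasDerivAt_id x).const_mul L).exp
      exact (hgx.mul hex.hasDerivWithinAt).congr_deriv (by field_simp; ring)
    · intro x hx
      rw [interior_Icc] at hx
      have hxI : x ∈ Icc (0:ℝ) 1 := ⟨hx.1.le, hx.2.le⟩
      have habs : |g x| = g x := abs_of_nonneg (hnonneg x hxI)
      have := hineq x hxI
      rw [habs] at this
      have h1 : 0 ≤ gd x + L * g x - ν := by nlinarith
      have h2 := Real.exp_pos (L * x)
      positivity
  have hkey : (g 0 - ν / L) * Real.exp (L * 0) ≤ (g 1 - ν / L) * Real.exp (L * 1) :=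
    hmono2 (left_mem_Icc.2 zero_le_one) (right_mem_Icc.2 zero_le_one) zero_le_one
  rw [hg0] at hkey
  have he0 : Real.exp (L * 0) = 1 := by norm_num
  rw [he0] at hkey
  by_contra hcon
  push_neg at hcon
  have he1 : 1 < Real.exp (L * 1) := by
    nlinarith [Real.add_one_le_exp (L * 1)]
  have hνL : 0 < ν / L := div_pos hν hL
  nlinarith [Real.exp_pos (L * 1)]

/-- Let `φ` solve `-J·φ' - S·φ = 0`, `φ(0) = I`, with `S` smooth symmetric, and fix a
(continuous) polar lift of `φ` with associated `Δ`.  If `v` is a nonvanishing `C¹` loop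
with `-J·v' - S·v = ν·v` and continuous argument `ϑ`, then the total winding
`(ϑ(1)-ϑ(0))/(2π)` is `> inf Δ` when `ν > 0`, and `< sup Δ` when `ν < 0`. -/
theorem eigenvector_winding_vs_winding_interval
    (S : ℝ → Matrix (Fin 2) (Fin 2) ℝ)
    (hSsmooth : ∀ i j, ContDiffOn ℝ (⊤ : ℕ∞) (fun t => S t i j) (Icc (0:ℝ) 1))
    (hSsymm : ∀ t ∈ Icc (0:ℝ) 1, (S t)ᵀ = S t)
    (φ φd : ℝ → Matrix (Fin 2) (Fin 2) ℝ)
    (hφ0 : φ 0 = 1)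
    (hφd : ∀ t ∈ Icc (0:ℝ) 1, ∀ i j,
      HasDerivWithinAt (fun τ => φ τ i j) (φd t i j) (Icc (0:ℝ) 1) t)
    (hφODE : ∀ t ∈ Icc (0:ℝ) 1, -(Jmat * φd t) - S t * φ t = 0)
    (r θ : ℝ → ℝ → ℝ)
    (hrcont : ContinuousOn (fun p : ℝ × ℝ => r p.1 p.2) (Icc (0:ℝ) 1 ×ˢ Icc (0:ℝ) (2 * π)))
    (hθcont : ContinuousOn (fun p : ℝ × ℝ => θ p.1 p.2) (Icc (0:ℝ) 1 ×ˢ Icc (0:ℝ) (2 * π)))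
    (hlift : IsPolarLift φ r θ)
    (ν : ℝ)
    (v vd : ℝ → Fin 2 → ℝ)
    (hvne : ∀ t ∈ Icc (0:ℝ) 1, v t ≠ 0)
    (hvper : v 1 = v 0)
    (hvd : ∀ t ∈ Icc (0:ℝ) 1, HasDerivWithinAt v (vd t) (Icc (0:ℝ) 1) t)
    (hvdcont : ContinuousOn vd (Icc (0:ℝ) 1))
    (hveq : ∀ t ∈ Icc (0:ℝ) 1, -(Jmat *ᵥ vd t) - S t *ᵥ v t = ν • v t)
    (ϑ : ℝ → ℝ)
    (hϑcont : ContinuousOn ϑ (Icc (0:ℝ) 1))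
    (hϑarg : ∀ t ∈ Icc (0:ℝ) 1, v t = norm2 (v t) • expVec (ϑ t)) :
    (0 < ν → sInf (windingDelta θ '' Icc (0:ℝ) (2 * π)) < (ϑ 1 - ϑ 0) / (2 * π)) ∧
    (ν < 0 → (ϑ 1 - ϑ 0) / (2 * π) < sSup (windingDelta θ '' Icc (0:ℝ) (2 * π))) := by
  have hπ : (0:ℝ) < π := Real.pi_pos
  have h2π : (0:ℝ) < 2 * π := by linarith
  -- the base angle s₀
  set m : ℤ := ⌊ϑ 0 / (2 * π)⌋ with hm
  set s0 : ℝ := ϑ 0 - m * (2 * π) with hs0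
  have hs0mem : s0 ∈ Icc (0:ℝ) (2 * π) := by
    have h1 : (m:ℝ) ≤ ϑ 0 / (2 * π) := Int.floor_le _
    have h2 : ϑ 0 / (2 * π) < m + 1 := Int.lt_floor_add_one _
    have h1' : (m:ℝ) * (2 * π) ≤ ϑ 0 := by
      rw [le_div_iff₀ h2π] at h1; linarith
    have h2' : ϑ 0 < ((m:ℝ) + 1) * (2 * π) := by
      rw [div_lt_iff₀ h2π] at h2; linarith
    constructor
    · rw [hs0]; linarith
    · rw [hs0]; nlinarith
  -- entries of S are bounded
  have hbnd : ∀ i j, ∃ C, ∀ t ∈ Icc (0:ℝ) 1, |S t i j| ≤ C := by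
    intro i j
    obtain ⟨C, hC⟩ := isCompact_Icc.exists_bound_of_continuousOn (hSsmooth i j).continuousOn
    exact ⟨C, fun t ht => by simpa [Real.norm_eq_abs] using hC t ht⟩
  obtain ⟨C00, hC00⟩ := hbnd 0 0
  obtain ⟨C01, hC01⟩ := hbnd 0 1
  obtain ⟨C10, hC10⟩ := hbnd 1 0
  obtain ⟨C11, hC11⟩ := hbnd 1 1
  have h0I : (0:ℝ) ∈ Icc (0:ℝ) 1 := ⟨le_rfl, zero_le_one⟩
  set L : ℝ := 2 * (C00 + C01 + C10 + C11) + 1 with hLdef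
  have hLpos : 0 < L := by
    have := hC00 0 h0I; have := hC01 0 h0I; have := hC10 0 h0I; have := hC11 0 h0I
    have := abs_nonneg (S 0 0 0); have := abs_nonneg (S 0 0 1)
    have := abs_nonneg (S 0 1 0); have := abs_nonneg (S 0 1 1)
    rw [hLdef]; linarith
  -- Lipschitz property of the quadratic form
  have hqLip : ∀ t ∈ Icc (0:ℝ) 1, ∀ a b : ℝ, |qfun S t a - qfun S t b| ≤ L * |a - b| := by
    intro t ht a b
    have h := qfun_lip S t a b
    have hb : 2 * (|S t 0 0| + |S t 0 1| + |S t 1 0| + |S t 1 1|) ≤ L := by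
      have := hC00 t ht; have := hC01 t ht; have := hC10 t ht; have := hC11 t ht
      rw [hLdef]; linarith
    calc |qfun S t a - qfun S t b|
        ≤ 2 * (|S t 0 0| + |S t 0 1| + |S t 1 0| + |S t 1 1|) * |a - b| := h
      _ ≤ L * |a - b| := mul_le_mul_of_nonneg_right hb (abs_nonneg _)
  -- the path w(τ) = φ(τ)·e^{is₀}, componentwise
  set w0 : ℝ → ℝ := fun τ => φ τ 0 0 * Real.cos s0 + φ τ 0 1 * Real.sin s0 with hw0def
  set w1 : ℝ → ℝ := fun τ => φ τ 1 0 * Real.cos s0 + φ τ 1 1 * Real.sin s0 with hw1def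
  have hwcomp : ∀ τ ∈ Icc (0:ℝ) 1,
      w0 τ = r τ s0 * Real.cos (θ τ s0) ∧ w1 τ = r τ s0 * Real.sin (θ τ s0) := by
    intro τ hτ
    have h := (hlift.1 τ hτ s0 hs0mem).2
    have h0 := congrFun h 0
    have h1 := congrFun h 1
    simp only [Matrix.mulVec, dotProduct, Fin.sum_univ_two, expVec, Pi.smul_apply,
      smul_eq_mul, Matrix.cons_val_zero, Matrix.cons_val_one, Matrix.head_cons] at h0 h1
    exact ⟨h0, h1⟩
  have hrpos : ∀ τ ∈ Icc (0:ℝ) 1, 0 < r τ s0 := fun τ hτ => (hlift.1 τ hτ s0 hs0mem).1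
  have hwsum : ∀ τ ∈ Icc (0:ℝ) 1, (w0 τ)^2 + (w1 τ)^2 = (r τ s0)^2 := by
    intro τ hτ
    obtain ⟨h0, h1⟩ := hwcomp τ hτ
    rw [h0, h1]
    linear_combination (r τ s0)^2 * Real.sin_sq_add_cos_sq (θ τ s0)
  have hwpos : ∀ τ ∈ Icc (0:ℝ) 1, 0 < (w0 τ)^2 + (w1 τ)^2 := by
    intro τ hτ
    rw [hwsum τ hτ]
    exact pow_pos (hrpos τ hτ) 2
  have hwsqrt : ∀ τ ∈ Icc (0:ℝ) 1, Real.sqrt ((w0 τ)^2 + (w1 τ)^2) = r τ s0 := by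
    intro τ hτ
    rw [hwsum τ hτ]
    exact Real.sqrt_sq (hrpos τ hτ).le
  -- continuity of the slice θ(·, s₀)
  have hθslice : ContinuousOn (fun τ => θ τ s0) (Icc (0:ℝ) 1) := by
    have hmap : ∀ τ ∈ Icc (0:ℝ) 1, ((τ, s0) : ℝ × ℝ) ∈ Icc (0:ℝ) 1 ×ˢ Icc (0:ℝ) (2 * π) :=
      fun τ hτ => ⟨hτ, hs0mem⟩
    exact hθcont.comp ((continuous_id.prodMk continuous_const).continuousOn) hmap
  -- ODE satisfied by θ(·, s₀)
  have hθD : ∀ t ∈ Icc (0:ℝ) 1,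
      HasDerivWithinAt (fun τ => θ τ s0) (qfun S t (θ t s0)) (Icc (0:ℝ) 1) t := by
    intro t ht
    -- matrix ODE entries
    have hODE : ∀ i j, (-(Jmat * φd t) - S t * φ t) i j = (0 : Matrix (Fin 2) (Fin 2) ℝ) i j :=
      fun i j => by rw [hφODE t ht]
    have hODE0 : ∀ j, φd t 1 j = S t 0 0 * φ t 0 j + S t 0 1 * φ t 1 j := by
      intro j
      have := hODE 0 j
      simp only [Matrix.sub_apply, Matrix.neg_apply, Matrix.mul_apply, Fin.sum_univ_two,
        Jmat, Matrix.cons_val_zero, Matrix.cons_val_one, Matrix.head_cons, Matrix.head_fin_const,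
        Matrix.zero_apply, Matrix.cons_val', Matrix.empty_val', Matrix.cons_val_fin_one,
        Matrix.of_apply] at this
      linarith
    have hODE1 : ∀ j, φd t 0 j = -(S t 1 0 * φ t 0 j + S t 1 1 * φ t 1 j) := by
      intro j
      have := hODE 1 j
      simp only [Matrix.sub_apply, Matrix.neg_apply, Matrix.mul_apply, Fin.sum_univ_two,
        Jmat, Matrix.cons_val_zero, Matrix.cons_val_one, Matrix.head_cons, Matrix.head_fin_const,
        Matrix.zero_apply, Matrix.cons_val', Matrix.empty_val', Matrix.cons_val_fin_one,
        Matrix.of_apply] at this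
      linarith
    -- derivatives of the components
    have hw0d : HasDerivWithinAt w0 (φd t 0 0 * Real.cos s0 + φd t 0 1 * Real.sin s0)
        (Icc (0:ℝ) 1) t :=
      ((hφd t ht 0 0).mul_const _).add ((hφd t ht 0 1).mul_const _)
    have hw1d : HasDerivWithinAt w1 (φd t 1 0 * Real.cos s0 + φd t 1 1 * Real.sin s0)
        (Icc (0:ℝ) 1) t :=
      ((hφd t ht 1 0).mul_const _).add ((hφd t ht 1 1).mul_const _)
    have harg : ∀ τ ∈ Icc (0:ℝ) 1,
        w0 τ = Real.sqrt ((w0 τ)^2+(w1 τ)^2) * Real.cos (θ τ s0) ∧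
        w1 τ = Real.sqrt ((w0 τ)^2+(w1 τ)^2) * Real.sin (θ τ s0) := by
      intro τ hτ
      rw [hwsqrt τ hτ]
      exact hwcomp τ hτ
    have hD := hasDerivWithinAt_arg' w0 w1 _ _ (fun τ => θ τ s0) t ht hw0d hw1d hwpos
      (hθslice t ht) harg
    have hval : (w0 t * (φd t 1 0 * Real.cos s0 + φd t 1 1 * Real.sin s0)
          - w1 t * (φd t 0 0 * Real.cos s0 + φd t 0 1 * Real.sin s0))
          / ((w0 t)^2 + (w1 t)^2) = qfun S t (θ t s0) := by
      have hwd1 : φd t 1 0 * Real.cos s0 + φd t 1 1 * Real.sin s0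
          = S t 0 0 * w0 t + S t 0 1 * w1 t := by
        show φd t 1 0 * Real.cos s0 + φd t 1 1 * Real.sin s0
          = S t 0 0 * (φ t 0 0 * Real.cos s0 + φ t 0 1 * Real.sin s0)
            + S t 0 1 * (φ t 1 0 * Real.cos s0 + φ t 1 1 * Real.sin s0)
        linear_combination Real.cos s0 * hODE0 0 + Real.sin s0 * hODE0 1
      have hwd0 : φd t 0 0 * Real.cos s0 + φd t 0 1 * Real.sin s0
          = -(S t 1 0 * w0 t + S t 1 1 * w1 t) := by
        show φd t 0 0 * Real.cos s0 + φd t 0 1 * Real.sin s0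
          = -(S t 1 0 * (φ t 0 0 * Real.cos s0 + φ t 0 1 * Real.sin s0)
            + S t 1 1 * (φ t 1 0 * Real.cos s0 + φ t 1 1 * Real.sin s0))
        linear_combination Real.cos s0 * hODE1 0 + Real.sin s0 * hODE1 1
      rw [hwd1, hwd0, hwsum t ht]
      obtain ⟨h0, h1⟩ := hwcomp t ht
      rw [h0, h1]
      rw [div_eq_iff (pow_ne_zero 2 (hrpos t ht).ne')]
      simp only [qfun]
      ring
    rw [hval] at hD
    exact hD
  -- ODE satisfied by ϑ
  have hvpos : ∀ τ ∈ Icc (0:ℝ) 1, 0 < (v τ 0)^2 + (v τ 1)^2 := by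
    intro τ hτ
    rcases lt_or_eq_of_le (by positivity : (0:ℝ) ≤ (v τ 0)^2 + (v τ 1)^2) with h | h
    · exact h
    · exfalso
      apply hvne τ hτ
      have h0 : v τ 0 = 0 := by nlinarith [sq_nonneg (v τ 0), sq_nonneg (v τ 1)]
      have h1 : v τ 1 = 0 := by nlinarith [sq_nonneg (v τ 0), sq_nonneg (v τ 1)]
      funext i
      fin_cases i
      · exact h0
      · exact h1
  have hvarg : ∀ τ ∈ Icc (0:ℝ) 1,
      v τ 0 = Real.sqrt ((v τ 0)^2+(v τ 1)^2) * Real.cos (ϑ τ) ∧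
      v τ 1 = Real.sqrt ((v τ 0)^2+(v τ 1)^2) * Real.sin (ϑ τ) := by
    intro τ hτ
    have h := hϑarg τ hτ
    have h0 := congrFun h 0
    have h1 := congrFun h 1
    simp only [norm2, expVec, Pi.smul_apply, smul_eq_mul, Matrix.cons_val_zero,
      Matrix.cons_val_one, Matrix.head_cons] at h0 h1
    exact ⟨h0, h1⟩
  have hϑD : ∀ t ∈ Icc (0:ℝ) 1,
      HasDerivWithinAt ϑ (qfun S t (ϑ t) + ν) (Icc (0:ℝ) 1) t := by
    intro t ht
    have hv0d : HasDerivWithinAt (fun τ => v τ 0) (vd t 0) (Icc (0:ℝ) 1) t := by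
      have := (ContinuousLinearMap.proj (R := ℝ) (φ := fun _ : Fin 2 => ℝ)
        0).hasFDerivAt.comp_hasDerivWithinAt t (hvd t ht)
      simpa [Function.comp_def] using this
    have hv1d : HasDerivWithinAt (fun τ => v τ 1) (vd t 1) (Icc (0:ℝ) 1) t := by
      have := (ContinuousLinearMap.proj (R := ℝ) (φ := fun _ : Fin 2 => ℝ)
        1).hasFDerivAt.comp_hasDerivWithinAt t (hvd t ht)
      simpa [Function.comp_def] using this
    -- componentwise ODE
    have hveqc := hveq t ht
    have hc0 := congrFun hveqc 0
    have hc1 := congrFun hveqc 1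
    simp only [Pi.sub_apply, Pi.neg_apply, Matrix.mulVec, dotProduct, Fin.sum_univ_two,
      Jmat, Matrix.cons_val_zero, Matrix.cons_val_one, Matrix.head_cons, Matrix.head_fin_const,
      Pi.smul_apply, smul_eq_mul, Matrix.cons_val', Matrix.empty_val', Matrix.cons_val_fin_one,
      Matrix.of_apply] at hc0 hc1
    have hvd1 : vd t 1 = S t 0 0 * v t 0 + S t 0 1 * v t 1 + ν * v t 0 := by linarith
    have hvd0 : vd t 0 = -(S t 1 0 * v t 0 + S t 1 1 * v t 1 + ν * v t 1) := by linarith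
    have hD := hasDerivWithinAt_arg' (fun τ => v τ 0) (fun τ => v τ 1) (vd t 0) (vd t 1)
      ϑ t ht hv0d hv1d hvpos (hϑcont t ht) hvarg
    have hval : (v t 0 * vd t 1 - v t 1 * vd t 0) / ((v t 0)^2 + (v t 1)^2)
        = qfun S t (ϑ t) + ν := by
      obtain ⟨h0, h1⟩ := hvarg t ht
      set n := Real.sqrt ((v t 0)^2+(v t 1)^2) with hn
      have hnpos : 0 < n := Real.sqrt_pos.2 (hvpos t ht)
      have hnsq : (v t 0)^2 + (v t 1)^2 = n^2 := by
        rw [hn, Real.sq_sqrt (hvpos t ht).le]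
      have hnum : v t 0 * vd t 1 - v t 1 * vd t 0
          = (qfun S t (ϑ t) + ν) * ((v t 0)^2 + (v t 1)^2) := by
        rw [hvd1, hvd0, hnsq, h0, h1]
        simp only [qfun]
        linear_combination (n^2 * ν) * Real.sin_sq_add_cos_sq (ϑ t)
      rw [hnum, mul_div_assoc, div_self (hvpos t ht).ne', mul_one]
    rw [hval] at hD
    exact hD
  -- the comparison function g
  set g : ℝ → ℝ := fun τ => ϑ τ - m * (2 * π) - θ τ s0 with hgdef
  set gd : ℝ → ℝ := fun t => qfun S t (ϑ t) + ν - qfun S t (θ t s0) with hgddef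
  have hgd : ∀ t ∈ Icc (0:ℝ) 1, HasDerivWithinAt g (gd t) (Icc (0:ℝ) 1) t := by
    intro t ht
    exact ((hϑD t ht).sub_const _).sub (hθD t ht)
  have hg0 : g 0 = 0 := by
    show ϑ 0 - ↑m * (2 * π) - θ 0 s0 = 0
    rw [hlift.2 s0 hs0mem, hs0]
    ring
  have hper : ∀ t, qfun S t (ϑ t - m * (2 * π)) = qfun S t (ϑ t) := by
    intro t
    simp only [qfun, Real.cos_sub_int_mul_two_pi, Real.sin_sub_int_mul_two_pi]
  have hLipg : ∀ t ∈ Icc (0:ℝ) 1, |qfun S t (ϑ t) - qfun S t (θ t s0)| ≤ L * |g t| := by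
    intro t ht
    have h := hqLip t ht (ϑ t - m * (2 * π)) (θ t s0)
    rw [hper t] at h
    exact h
  -- conclusion
  have hΔcont : ContinuousOn (windingDelta θ) (Icc (0:ℝ) (2 * π)) := by
    have hslice : ContinuousOn (fun s => θ 1 s) (Icc (0:ℝ) (2 * π)) := by
      have hmap : ∀ s ∈ Icc (0:ℝ) (2 * π),
          ((1, s) : ℝ × ℝ) ∈ Icc (0:ℝ) 1 ×ˢ Icc (0:ℝ) (2 * π) :=
        fun s hs => ⟨⟨zero_le_one, le_rfl⟩, hs⟩
      exact hθcont.comp ((continuous_const.prodMk continuous_id).continuousOn) hmap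
    have : ContinuousOn (fun s => (θ 1 s - s) / (2 * π)) (Icc (0:ℝ) (2 * π)) :=
      (hslice.sub continuousOn_id).div_const _
    exact this
  have himg : IsCompact (windingDelta θ '' Icc (0:ℝ) (2 * π)) :=
    isCompact_Icc.image_of_continuousOn hΔcont
  have hmem : windingDelta θ s0 ∈ windingDelta θ '' Icc (0:ℝ) (2 * π) :=
    ⟨s0, hs0mem, rfl⟩
  have h1I : (1:ℝ) ∈ Icc (0:ℝ) 1 := ⟨zero_le_one, le_rfl⟩
  constructor
  · -- ν > 0
    intro hν
    have hineq : ∀ t ∈ Icc (0:ℝ) 1, ν - L * |g t| ≤ gd t := by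
      intro t ht
      have h := hLipg t ht
      have h2 := neg_abs_le (qfun S t (ϑ t) - qfun S t (θ t s0))
      show ν - L * |ϑ t - ↑m * (2 * π) - θ t s0| ≤ qfun S t (ϑ t) + ν - qfun S t (θ t s0)
      linarith
    have hcompa : (0:ℝ) < ϑ 1 - ↑m * (2 * π) - θ 1 s0 :=
      comparison_pos' hLpos hν hgd hg0 hineq
    -- ϑ 1 - m·2π - θ 1 s0 > 0
    have hlt : windingDelta θ s0 < (ϑ 1 - ϑ 0) / (2 * π) := by
      rw [windingDelta]
      have hnum : θ 1 s0 - s0 < ϑ 1 - ϑ 0 := by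
        rw [hs0] at *
        linarith
      exact div_lt_div_of_pos_right hnum h2π
    exact lt_of_le_of_lt (csInf_le himg.bddBelow hmem) hlt
  · -- ν < 0
    intro hν
    have hν' : 0 < -ν := by linarith
    have hgd' : ∀ t ∈ Icc (0:ℝ) 1, HasDerivWithinAt (fun τ => -g τ) (-gd t) (Icc (0:ℝ) 1) t :=
      fun t ht => (hgd t ht).neg
    have hg0' : -g 0 = 0 := by rw [hg0]; ring
    have hineq' : ∀ t ∈ Icc (0:ℝ) 1, -ν - L * |(-g t)| ≤ -gd t := by
      intro t ht
      have h := hLipg t ht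
      have h2 := le_abs_self (qfun S t (ϑ t) - qfun S t (θ t s0))
      show -ν - L * |-(ϑ t - ↑m * (2 * π) - θ t s0)| ≤ -(qfun S t (ϑ t) + ν - qfun S t (θ t s0))
      rw [abs_neg]
      linarith
    have hcompa : (0:ℝ) < -(ϑ 1 - ↑m * (2 * π) - θ 1 s0) :=
      comparison_pos' hLpos hν' hgd' hg0' hineq'
    have hlt : (ϑ 1 - ϑ 0) / (2 * π) < windingDelta θ s0 := by
      rw [windingDelta]
      have hnum : ϑ 1 - ϑ 0 < θ 1 s0 - s0 := by
        rw [hs0] at *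
        linarith
      exact div_lt_div_of_pos_right hnum h2π
    exact lt_of_lt_of_le hlt (le_csSup himg.bddAbove hmem)
end
end

section
/- Let S:[0,1]→{symmetric 2×2 real matrices} be smooth, let φ be the solution of −J·φ' − S·φ = 0 with φ(0)=I, and fix a polar lift of φ with associated function Δ. Let v:[0,1]→ℝ²∖{0} be C¹ with v(1)=v(0) and −J·v'(t) − S(t)·v(t) = 0 for all t ∈ [0,1], and let ϑ be a continuous argument of v. Then k := (ϑ(1)−ϑ(0))/(2π) is an integer satisfying inf Δ ≤ k ≤ sup Δ; more precisely, k = Δ(s₀) for any s₀ ∈ [0,2π] with v(0) = |v(0)|·e^{is₀}. -/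
open Real Set Matrix

noncomputable section

lemma norm2_pos {w : Fin 2 → ℝ} (hw : w ≠ 0) : 0 < norm2 w := by
  have h : w 0 ≠ 0 ∨ w 1 ≠ 0 := by
    by_contra h
    push_neg at h
    exact hw (funext fun i => by fin_cases i <;> simp [h.1, h.2])
  apply Real.sqrt_pos.2
  rcases h with h | h
  · nlinarith [sq_nonneg (w 1), sq_pos_of_ne_zero h]
  · nlinarith [sq_nonneg (w 0), sq_pos_of_ne_zero h]

lemma expVec_smul_eq {a b c₁ c₂ : ℝ} (h₁ : 0 < c₁) (h₂ : 0 < c₂)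
    (h : c₁ • expVec a = c₂ • expVec b) : ∃ m : ℤ, a = b + m * (2 * π) := by
  have h0 := congrFun h 0
  have h1 := congrFun h 1
  simp [expVec] at h0 h1
  have hc : c₁ = c₂ := by
    have e1 : c₁ ^ 2 = c₂ ^ 2 := by
      have ha := Real.sin_sq_add_cos_sq a
      have hb := Real.sin_sq_add_cos_sq b
      calc c₁ ^ 2 = c₁ ^ 2 * (Real.sin a ^ 2 + Real.cos a ^ 2) := by rw [ha]; ring
        _ = (c₁ * Real.sin a) ^ 2 + (c₁ * Real.cos a) ^ 2 := by ring
        _ = (c₂ * Real.sin b) ^ 2 + (c₂ * Real.cos b) ^ 2 := by rw [h0, h1]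
        _ = c₂ ^ 2 * (Real.sin b ^ 2 + Real.cos b ^ 2) := by ring
        _ = c₂ ^ 2 := by rw [hb]; ring
    have hle : c₁ ≤ c₂ := by nlinarith
    have hge : c₂ ≤ c₁ := by nlinarith
    linarith
  subst hc
  have hcos : Real.cos a = Real.cos b := mul_left_cancel₀ h₁.ne' h0
  have hsin : Real.sin a = Real.sin b := mul_left_cancel₀ h₁.ne' h1
  have hexp : Complex.exp (a * Complex.I) = Complex.exp (b * Complex.I) := by
    rw [Complex.exp_mul_I, Complex.exp_mul_I, ← Complex.ofReal_cos, ← Complex.ofReal_sin,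
      ← Complex.ofReal_cos, ← Complex.ofReal_sin, hcos, hsin]
  obtain ⟨n, hn⟩ := Complex.exp_eq_exp_iff_exists_int.mp hexp
  refine ⟨n, ?_⟩
  have hn' : (a : ℂ) * Complex.I = ((b + n * (2 * π) : ℝ) : ℂ) * Complex.I := by
    rw [hn]; push_cast; ring
  have := mul_right_cancel₀ Complex.I_ne_zero hn'
  exact_mod_cast this

lemma int_no_incr {f : ℝ → ℝ} {a b : ℝ} (hab : a ≤ b) (hf : ContinuousOn f (Icc a b))
    (hi : ∀ t ∈ Icc a b, ∃ m : ℤ, f t = m) : ¬ f a < f b := by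
  intro hlt
  obtain ⟨ma, hma⟩ := hi a (left_mem_Icc.2 hab)
  obtain ⟨mb, hmb⟩ := hi b (right_mem_Icc.2 hab)
  have hmalt : ma < mb := by
    have : (ma : ℝ) < mb := by rw [← hma, ← hmb]; exact hlt
    exact_mod_cast this
  have hstep : (ma : ℝ) + 1 ≤ mb := by exact_mod_cast hmalt
  have hc : f a + 1/2 ∈ Icc (f a) (f b) := ⟨by linarith, by rw [hma, hmb]; linarith⟩
  obtain ⟨t, ht, hft⟩ := intermediate_value_Icc hab hf hc
  obtain ⟨m, hm⟩ := hi t ht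
  have h2 : (m : ℝ) * 2 = ma * 2 + 1 := by rw [hm] at hft; rw [hma] at hft; linarith
  have h3 : m * 2 = ma * 2 + 1 := by exact_mod_cast h2
  omega

lemma int_endpoints_eq {f : ℝ → ℝ} {a b : ℝ} (hab : a ≤ b) (hf : ContinuousOn f (Icc a b))
    (hi : ∀ t ∈ Icc a b, ∃ m : ℤ, f t = m) : f b = f a := by
  have h1 := int_no_incr hab hf hi
  have h2 := int_no_incr hab hf.neg (fun t ht => by
    obtain ⟨m, hm⟩ := hi t ht
    exact ⟨-m, by simp [Pi.neg_apply, hm]⟩)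
  rw [not_lt] at h1 h2
  have h2' : -(f b) ≤ -(f a) := h2
  linarith

/-- Let `φ` solve `-J·φ' - S·φ = 0`, `φ(0) = I`, with `S` smooth symmetric, and fix a
(continuous) polar lift of `φ` with associated `Δ`.  If `v` is a nonvanishing `C¹` loop
with `-J·v' - S·v = 0` and continuous argument `ϑ`, then `k = (ϑ(1)-ϑ(0))/(2π)` is an
integer with `inf Δ ≤ k ≤ sup Δ`; more precisely `k = Δ(s₀)` whenever
`v(0) = |v(0)|·e^{is₀}` with `s₀ ∈ [0,2π]`. -/
theorem kernel_eigenvector_winding_eq_delta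
    (S : ℝ → Matrix (Fin 2) (Fin 2) ℝ)
    (hSsmooth : ∀ i j, ContDiffOn ℝ (⊤ : ℕ∞) (fun t => S t i j) (Icc (0:ℝ) 1))
    (hSsymm : ∀ t ∈ Icc (0:ℝ) 1, (S t)ᵀ = S t)
    (φ φd : ℝ → Matrix (Fin 2) (Fin 2) ℝ)
    (hφ0 : φ 0 = 1)
    (hφd : ∀ t ∈ Icc (0:ℝ) 1, ∀ i j,
      HasDerivWithinAt (fun τ => φ τ i j) (φd t i j) (Icc (0:ℝ) 1) t)
    (hφODE : ∀ t ∈ Icc (0:ℝ) 1, -(Jmat * φd t) - S t * φ t = 0)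
    (r θ : ℝ → ℝ → ℝ)
    (hrcont : ContinuousOn (fun p : ℝ × ℝ => r p.1 p.2) (Icc (0:ℝ) 1 ×ˢ Icc (0:ℝ) (2 * π)))
    (hθcont : ContinuousOn (fun p : ℝ × ℝ => θ p.1 p.2) (Icc (0:ℝ) 1 ×ˢ Icc (0:ℝ) (2 * π)))
    (hlift : IsPolarLift φ r θ)
    (v vd : ℝ → Fin 2 → ℝ)
    (hvne : ∀ t ∈ Icc (0:ℝ) 1, v t ≠ 0)
    (hvper : v 1 = v 0)
    (hvd : ∀ t ∈ Icc (0:ℝ) 1, HasDerivWithinAt v (vd t) (Icc (0:ℝ) 1) t)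
    (hvdcont : ContinuousOn vd (Icc (0:ℝ) 1))
    (hveq : ∀ t ∈ Icc (0:ℝ) 1, -(Jmat *ᵥ vd t) - S t *ᵥ v t = 0)
    (ϑ : ℝ → ℝ)
    (hϑcont : ContinuousOn ϑ (Icc (0:ℝ) 1))
    (hϑarg : ∀ t ∈ Icc (0:ℝ) 1, v t = norm2 (v t) • expVec (ϑ t)) :
    (∃ m : ℤ, (ϑ 1 - ϑ 0) / (2 * π) = (m : ℝ)) ∧
    sInf (windingDelta θ '' Icc (0:ℝ) (2 * π)) ≤ (ϑ 1 - ϑ 0) / (2 * π) ∧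
    (ϑ 1 - ϑ 0) / (2 * π) ≤ sSup (windingDelta θ '' Icc (0:ℝ) (2 * π)) ∧
    ∀ s₀ ∈ Icc (0:ℝ) (2 * π), v 0 = norm2 (v 0) • expVec s₀ →
      (ϑ 1 - ϑ 0) / (2 * π) = windingDelta θ s₀ := by
  have hπ : (0:ℝ) < 2 * π := by positivity
  have h0mem : (0:ℝ) ∈ Icc (0:ℝ) 1 := ⟨le_refl _, zero_le_one⟩
  have h1mem : (1:ℝ) ∈ Icc (0:ℝ) 1 := ⟨zero_le_one, le_refl _⟩
  have hJJ : Jmat * Jmat = (-1 : Matrix (Fin 2) (Fin 2) ℝ) := by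
    ext i j
    fin_cases i <;> fin_cases j <;>
      simp [Jmat, Matrix.mul_apply, Fin.sum_univ_two, Matrix.one_apply]
  have hScont : ∀ i j, ContinuousOn (fun t => S t i j) (Icc (0:ℝ) 1) :=
    fun i j => (hSsmooth i j).continuousOn
  obtain ⟨C, hC0, hC⟩ : ∃ C : ℝ, 0 ≤ C ∧ ∀ t ∈ Icc (0:ℝ) 1, ∀ i j, |S t i j| ≤ C := by
    obtain ⟨C00, h00⟩ := isCompact_Icc.exists_bound_of_continuousOn (hScont 0 0)
    obtain ⟨C01, h01⟩ := isCompact_Icc.exists_bound_of_continuousOn (hScont 0 1)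
    obtain ⟨C10, h10⟩ := isCompact_Icc.exists_bound_of_continuousOn (hScont 1 0)
    obtain ⟨C11, h11⟩ := isCompact_Icc.exists_bound_of_continuousOn (hScont 1 1)
    refine ⟨max (max C00 C01) (max C10 C11) ⊔ 0, le_max_right _ _, fun t ht i j => ?_⟩
    fin_cases i <;> fin_cases j
    · exact le_trans ((Real.norm_eq_abs _).symm.trans_le (h00 t ht))
        (le_trans (le_max_left _ _) (le_trans (le_max_left _ _) (le_max_left _ _)))
    · exact le_trans ((Real.norm_eq_abs _).symm.trans_le (h01 t ht))
        (le_trans (le_max_right _ _) (le_trans (le_max_left _ _) (le_max_left _ _)))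
    · exact le_trans ((Real.norm_eq_abs _).symm.trans_le (h10 t ht))
        (le_trans (le_max_left _ _) (le_trans (le_max_right _ _) (le_max_left _ _)))
    · exact le_trans ((Real.norm_eq_abs _).symm.trans_le (h11 t ht))
        (le_trans (le_max_right _ _) (le_trans (le_max_right _ _) (le_max_left _ _)))
  set proj : ℝ → ℝ := fun t => max 0 (min 1 t) with hprojdef
  have hprojmem : ∀ t, proj t ∈ Icc (0:ℝ) 1 := fun t =>
    ⟨le_max_left _ _, max_le zero_le_one (min_le_left _ _)⟩
  have hprojeq : ∀ t ∈ Icc (0:ℝ) 1, proj t = t := fun t ht => by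
    simp only [hprojdef]
    rw [min_eq_right ht.2, max_eq_right ht.1]
  set K : NNReal := ⟨2 * C, by positivity⟩ with hKdef
  set F : ℝ → (Fin 2 → ℝ) → (Fin 2 → ℝ) := fun t x => (Jmat * S (proj t)) *ᵥ x with hFdef
  have hAbound : ∀ t i j, |(Jmat * S (proj t)) i j| ≤ C := by
    intro t i j
    have h := hC (proj t) (hprojmem t)
    fin_cases i <;> fin_cases j <;>
      simp [Jmat, Matrix.mul_apply, Fin.sum_univ_two, abs_neg] <;>
      first
        | exact h 1 0 | exact h 1 1 | exact h 0 0 | exact h 0 1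
        | exact (abs_neg _).le.trans ((abs_neg _).symm ▸ h 1 0)
  have hmulVzbound : ∀ t (z : Fin 2 → ℝ), ‖(Jmat * S (proj t)) *ᵥ z‖ ≤ 2 * C * ‖z‖ := by
    intro t z
    refine (pi_norm_le_iff_of_nonneg (by positivity)).2 fun i => ?_
    have hmv : ((Jmat * S (proj t)) *ᵥ z) i
        = (Jmat * S (proj t)) i 0 * z 0 + (Jmat * S (proj t)) i 1 * z 1 := by
      simp [Matrix.mulVec, dotProduct, Fin.sum_univ_two]
    rw [Real.norm_eq_abs, hmv]
    have h0 := hAbound t i 0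
    have h1 := hAbound t i 1
    have hz0 : |z 0| ≤ ‖z‖ := by rw [← Real.norm_eq_abs]; exact norm_le_pi_norm z 0
    have hz1 : |z 1| ≤ ‖z‖ := by rw [← Real.norm_eq_abs]; exact norm_le_pi_norm z 1
    calc |(Jmat * S (proj t)) i 0 * z 0 + (Jmat * S (proj t)) i 1 * z 1|
        ≤ |(Jmat * S (proj t)) i 0| * |z 0| + |(Jmat * S (proj t)) i 1| * |z 1| := by
          refine (abs_add_le _ _).trans ?_
          rw [abs_mul, abs_mul]
      _ ≤ C * ‖z‖ + C * ‖z‖ :=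
          add_le_add (mul_le_mul h0 hz0 (abs_nonneg _) hC0)
            (mul_le_mul h1 hz1 (abs_nonneg _) hC0)
      _ = 2 * C * ‖z‖ := by ring
  have hlip : ∀ t, LipschitzWith K (F t) := by
    intro t
    rw [lipschitzWith_iff_dist_le_mul]
    intro x y
    rw [dist_eq_norm, dist_eq_norm]
    have hK : (K : ℝ) = 2 * C := rfl
    rw [hK]
    have : F t x - F t y = (Jmat * S (proj t)) *ᵥ (x - y) := by
      simp only [hFdef]
      rw [Matrix.mulVec_sub]
    rw [this]
    exact hmulVzbound t (x - y)
  have hmemIci : ∀ t ∈ Ico (0:ℝ) 1, Icc (0:ℝ) 1 ∈ nhdsWithin t (Ici t) := by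
    intro t ht
    rw [mem_nhdsWithin]
    exact ⟨Iio 1, isOpen_Iio, ht.2, fun x hx => ⟨le_trans ht.1 hx.2, le_of_lt hx.1⟩⟩
  have hvd_eq : ∀ t ∈ Icc (0:ℝ) 1, F t (v t) = vd t := by
    intro t ht
    have h := hveq t ht
    have hS : S t *ᵥ v t = -(Jmat *ᵥ vd t) := (sub_eq_zero.mp h).symm
    calc F t (v t) = Jmat *ᵥ (S t *ᵥ v t) := by
          simp only [hFdef]
          rw [hprojeq t ht, ← Matrix.mulVec_mulVec]
      _ = -(Jmat *ᵥ (Jmat *ᵥ vd t)) := by rw [hS, Matrix.mulVec_neg]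
      _ = vd t := by
          rw [Matrix.mulVec_mulVec, hJJ, Matrix.neg_mulVec, Matrix.one_mulVec, neg_neg]
  have hφd_eq : ∀ t ∈ Icc (0:ℝ) 1, Jmat * (S t * φ t) = φd t := by
    intro t ht
    have h := hφODE t ht
    have hS : S t * φ t = -(Jmat * φd t) := (sub_eq_zero.mp h).symm
    rw [hS, mul_neg, ← mul_assoc, hJJ, neg_mul, one_mul, neg_neg]
  set g : ℝ → Fin 2 → ℝ := fun τ => φ τ *ᵥ v 0 with hgdef
  have hgd : ∀ t ∈ Icc (0:ℝ) 1, HasDerivWithinAt g (φd t *ᵥ v 0) (Icc (0:ℝ) 1) t := by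
    intro t ht
    rw [hasDerivWithinAt_pi]
    intro i
    have key : ∀ τ, g τ i = φ τ i 0 * v 0 0 + φ τ i 1 * v 0 1 := fun τ => by
      fin_cases i <;> simp [hgdef, Matrix.mulVec, dotProduct, Fin.sum_univ_two]
    have key' : (φd t *ᵥ v 0) i = φd t i 0 * v 0 0 + φd t i 1 * v 0 1 := by
      simp [Matrix.mulVec, dotProduct, Fin.sum_univ_two]
    rw [key']
    have hd := ((hφd t ht i 0).mul_const (v 0 0)).add ((hφd t ht i 1).mul_const (v 0 1))
    exact hd.congr (fun τ _ => key τ) (key t)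
  have huniq : ∀ t ∈ Icc (0:ℝ) 1, v t = g t := by
    have hvcont : ContinuousOn v (Icc (0:ℝ) 1) := fun t ht => (hvd t ht).continuousWithinAt
    have hgcont : ContinuousOn g (Icc (0:ℝ) 1) := fun t ht => (hgd t ht).continuousWithinAt
    have h0 : v 0 = g 0 := by
      simp only [hgdef]
      rw [hφ0, Matrix.one_mulVec]
    exact ODE_solution_unique_of_mem_Icc_right (v := F) (s := fun _ => univ)
      (K := K) (fun t _ => (hlip t).lipschitzOnWith)
      hvcont
      (fun t ht => by
        rw [hvd_eq t (Ico_subset_Icc_self ht)]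
        exact (hvd t (Ico_subset_Icc_self ht)).mono_of_mem_nhdsWithin (hmemIci t ht))
      (fun _ _ => mem_univ _)
      hgcont
      (fun t ht => by
        have hFg : F t (g t) = φd t *ᵥ v 0 := by
          simp only [hFdef, hgdef]
          rw [hprojeq t (Ico_subset_Icc_self ht), Matrix.mulVec_mulVec, mul_assoc,
            hφd_eq t (Ico_subset_Icc_self ht)]
        rw [hFg]
        exact (hgd t (Ico_subset_Icc_self ht)).mono_of_mem_nhdsWithin (hmemIci t ht))
      (fun _ _ => mem_univ _)
      h0
  -- the key claim
  have key : ∀ s₀ ∈ Icc (0:ℝ) (2 * π), v 0 = norm2 (v 0) • expVec s₀ →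
      (ϑ 1 - ϑ 0) / (2 * π) = windingDelta θ s₀ := by
    intro s₀ hs₀ hv0
    have hθs₀cont : ContinuousOn (fun t => θ t s₀) (Icc (0:ℝ) 1) := by
      have heq : (fun t => θ t s₀) = (fun p : ℝ × ℝ => θ p.1 p.2) ∘ (fun t : ℝ => (t, s₀)) := rfl
      rw [heq]
      exact hθcont.comp ((continuous_id.prodMk continuous_const).continuousOn)
        (fun t ht => mk_mem_prod ht hs₀)
    have hint : ∀ t ∈ Icc (0:ℝ) 1, ∃ m : ℤ, (ϑ t - θ t s₀) / (2 * π) = m := by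
      intro t ht
      have h1 : v t = norm2 (v t) • expVec (ϑ t) := hϑarg t ht
      obtain ⟨hrpos, hφe⟩ := hlift.1 t ht s₀ hs₀
      have h2 : v t = (norm2 (v 0) * r t s₀) • expVec (θ t s₀) := by
        rw [huniq t ht]
        show φ t *ᵥ v 0 = _
        conv_lhs => rw [hv0]
        rw [Matrix.mulVec_smul, hφe, smul_smul]
      have hp1 : 0 < norm2 (v t) := norm2_pos (hvne t ht)
      have hp2 : 0 < norm2 (v 0) * r t s₀ := mul_pos (norm2_pos (hvne 0 h0mem)) hrpos
      obtain ⟨m, hm⟩ := expVec_smul_eq hp1 hp2 (h1.symm.trans h2)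
      refine ⟨m, ?_⟩
      rw [hm]
      have hcl : θ t s₀ + ↑m * (2 * π) - θ t s₀ = ↑m * (2 * π) := by ring
      rw [hcl, mul_div_assoc, div_self hπ.ne', mul_one]
    have hcont : ContinuousOn (fun t => (ϑ t - θ t s₀) / (2 * π)) (Icc (0:ℝ) 1) :=
      (hϑcont.sub hθs₀cont).div_const _
    have hend := int_endpoints_eq zero_le_one hcont hint
    have hθ0 : θ 0 s₀ = s₀ := hlift.2 s₀ hs₀
    rw [hθ0] at hend
    show (ϑ 1 - ϑ 0) / (2 * π) = (θ 1 s₀ - s₀) / (2 * π)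
    rw [div_eq_div_iff hπ.ne' hπ.ne'] at hend
    rw [div_eq_div_iff hπ.ne' hπ.ne']
    linarith
  -- canonical s₁
  set s₁ : ℝ := ϑ 0 - 2 * π * ⌊ϑ 0 / (2 * π)⌋ with hs₁def
  have hfr : s₁ = 2 * π * Int.fract (ϑ 0 / (2 * π)) := by
    rw [hs₁def, Int.fract]
    field_simp
  have hs₁mem : s₁ ∈ Icc (0:ℝ) (2 * π) := by
    rw [hfr]
    constructor
    · have := Int.fract_nonneg (ϑ 0 / (2 * π))
      positivity
    · nlinarith [Int.fract_lt_one (ϑ 0 / (2 * π)), Int.fract_nonneg (ϑ 0 / (2 * π))]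
  have hv0' : v 0 = norm2 (v 0) • expVec s₁ := by
    have h00 := hϑarg 0 h0mem
    have hϑs₁ : ϑ 0 = s₁ + ↑⌊ϑ 0 / (2 * π)⌋ * (2 * π) := by rw [hs₁def]; ring
    have hev : expVec (ϑ 0) = expVec s₁ := by
      rw [hϑs₁]
      funext i
      fin_cases i <;>
        simp [expVec, Real.cos_add_int_mul_two_pi, Real.sin_add_int_mul_two_pi]
    conv_lhs => rw [h00, hev]
  have hks₁ := key s₁ hs₁mem hv0'
  -- integer
  have hvv : norm2 (v 1) • expVec (ϑ 1) = norm2 (v 0) • expVec (ϑ 0) := by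
    rw [← hϑarg 1 h1mem, ← hϑarg 0 h0mem, hvper]
  obtain ⟨m, hm⟩ := expVec_smul_eq (norm2_pos (hvne 1 h1mem)) (norm2_pos (hvne 0 h0mem)) hvv
  have hintm : (ϑ 1 - ϑ 0) / (2 * π) = (m : ℝ) := by
    rw [hm]
    have hcl : ϑ 0 + ↑m * (2 * π) - ϑ 0 = ↑m * (2 * π) := by ring
    rw [hcl, mul_div_assoc, div_self hπ.ne', mul_one]
  -- bounds
  have hΔeq : windingDelta θ = fun s => (θ 1 s - s) / (2 * π) := rfl
  have hΔcont : ContinuousOn (windingDelta θ) (Icc (0:ℝ) (2 * π)) := by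
    rw [hΔeq]
    have hθ1 : ContinuousOn (fun s => θ 1 s) (Icc (0:ℝ) (2 * π)) := by
      have heq : (fun s => θ 1 s) = (fun p : ℝ × ℝ => θ p.1 p.2) ∘ (fun s : ℝ => ((1:ℝ), s)) := rfl
      rw [heq]
      exact hθcont.comp ((continuous_const.prodMk continuous_id).continuousOn)
        (fun s hs => mk_mem_prod h1mem hs)
    exact (hθ1.sub continuousOn_id).div_const _
  have hcompact : IsCompact (windingDelta θ '' Icc (0:ℝ) (2 * π)) :=
    isCompact_Icc.image_of_continuousOn hΔcont
  refine ⟨⟨m, hintm⟩, ?_, ?_, key⟩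
  · rw [hks₁]
    exact csInf_le hcompact.bddBelow (mem_image_of_mem _ hs₁mem)
  · rw [hks₁]
    exact le_csSup hcompact.bddAbove (mem_image_of_mem _ hs₁mem)
end
end

section
/- For every matrix A ∈ SL(2,ℝ) there exist T ∈ SL(2,ℝ), a 2×2 real matrix Y with trace(Y) = 0, and a sign ε ∈ {1,−1}, such that A = ε·T⁻¹·exp(Y)·T. In other words, every element of the real symplectic group Sp(1) = SL(2,ℝ) is, up to sign, conjugate within SL(2,ℝ) to the exponential of a traceless real 2×2 matrix. -/
/-!
If `N * N = σ • 1` for a real scalar `σ`, the exponential series of `t • N` splits into an even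
part, a multiple of `1`, and an odd part, a multiple of `N`; for `σ = 1, -1, 0` these are the
series of `cosh`/`sinh`, `cos`/`sin`, and `1`/`t`. For `B ∈ SL(2,ℝ)` of trace `τ`, Cayley–Hamilton
gives `(B - τ/2)² = (τ²/4 - 1)`, so when `τ > -2` a suitable multiple `Y` of `B - τ/2` has
`exp Y = B`. Otherwise `-B` has trace `≥ 2`, and one takes `ε = -1`; the conjugator is `T = 1`.
-/

open Matrix NormedSpace
open scoped Nat

section ExpOfMulSelf

variable {𝔸 : Type*} [NormedRing 𝔸] [NormedAlgebra ℝ 𝔸] [CompleteSpace 𝔸]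

theorem exp_smul_eq_of_mul_self_eq_smul_one {N : 𝔸} {σ : ℝ} (hN : N * N = σ • 1) (t : ℝ)
    {c s : ℝ} (hc : HasSum (fun n : ℕ => σ ^ n * t ^ (2 * n) / (2 * n)!) c)
    (hs : HasSum (fun n : ℕ => σ ^ n * t ^ (2 * n + 1) / (2 * n + 1)!) s) :
    exp (t • N) = c • 1 + s • N := by
  have hpow : ∀ n : ℕ, N ^ (2 * n) = σ ^ n • 1 := fun n => by
    rw [pow_mul, sq, hN, smul_pow, one_pow]
  refine (exp_series_hasSum_exp' (𝕂 := ℝ) (t • N)).unique (HasSum.even_add_odd ?_ ?_)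
  · convert hc.smul_const (1 : 𝔸) using 2 with n
    rw [smul_pow, hpow, smul_smul, smul_smul]
    congr 1
    field_simp
  · convert hs.smul_const N using 2 with n
    rw [smul_pow, pow_succ N, hpow, smul_mul_assoc, one_mul, smul_smul, smul_smul]
    congr 1
    field_simp

theorem exp_smul_of_mul_self_eq_one {N : 𝔸} (hN : N * N = 1) (t : ℝ) :
    exp (t • N) = Real.cosh t • 1 + Real.sinh t • N :=
  exp_smul_eq_of_mul_self_eq_smul_one (σ := 1) (by rw [hN, one_smul]) t
    (by simpa using Real.hasSum_cosh t) (by simpa using Real.hasSum_sinh t)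

theorem exp_smul_of_mul_self_eq_neg_one {N : 𝔸} (hN : N * N = -1) (t : ℝ) :
    exp (t • N) = Real.cos t • 1 + Real.sin t • N :=
  exp_smul_eq_of_mul_self_eq_smul_one (σ := -1) (by rw [hN, neg_one_smul]) t
    (Real.hasSum_cos t) (Real.hasSum_sin t)

theorem exp_of_mul_self_eq_zero {N : 𝔸} (hN : N * N = 0) : exp N = 1 + N := by
  have h := exp_smul_eq_of_mul_self_eq_smul_one (σ := 0) (c := 1) (s := 1)
    (by rw [hN, zero_smul]) 1 ?_ ?_
  · simpa using h
  all_goals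
    convert hasSum_ite_eq 0 (1 : ℝ) using 2 with n
    cases n <;> simp

end ExpOfMulSelf

namespace Matrix

theorem sub_trace_div_two_mul_self (B : Matrix (Fin 2) (Fin 2) ℝ) :
    (B - (B.trace / 2) • 1) * (B - (B.trace / 2) • 1) = (B.trace ^ 2 / 4 - B.det) • 1 := by
  ext i j
  fin_cases i <;> fin_cases j <;>
    simp [Matrix.mul_apply, trace_fin_two, det_fin_two] <;> ring

theorem trace_sub_trace_div_two (B : Matrix (Fin 2) (Fin 2) ℝ) :
    (B - (B.trace / 2) • 1).trace = 0 := by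
  simp [trace_sub, trace_smul]

-- `exp` on matrices depends only on the topology; any algebra norm lets us use the lemmas above,
-- whose `exp` then agrees with the goal's only up to unfolding instances (hence `.trans`).
attribute [local instance] Matrix.linftyOpNormedRing Matrix.linftyOpNormedAlgebra

theorem exists_trace_eq_zero_exp_eq {B : Matrix (Fin 2) (Fin 2) ℝ} (hdet : B.det = 1)
    (htr : -2 < B.trace) : ∃ Y : Matrix (Fin 2) (Fin 2) ℝ, Y.trace = 0 ∧ exp Y = B := by
  have hNN := sub_trace_div_two_mul_self B
  have hNtr := trace_sub_trace_div_two B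
  have hB : (B.trace / 2) • 1 + (B - (B.trace / 2) • 1) = B := add_sub_cancel _ _
  rw [hdet] at hNN
  generalize B.trace = τ at *
  generalize B - (τ / 2) • 1 = N at *
  subst hB
  have hnormalize : ∀ r σ : ℝ, r ≠ 0 → τ ^ 2 / 4 - 1 = σ * r ^ 2 →
      (r⁻¹ • N) * (r⁻¹ • N) = σ • 1 := by
    intro r σ hr hσ
    rw [smul_mul_smul_comm, hNN, smul_smul, hσ]
    congr 1
    field_simp
  rcases lt_trichotomy τ 2 with hτ | rfl | hτ
  · set r := √(1 - (τ / 2) ^ 2)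
    have hr : 0 < r := Real.sqrt_pos.2 (by nlinarith)
    have hr2 : r ^ 2 = 1 - (τ / 2) ^ 2 := Real.sq_sqrt (by nlinarith)
    have hsq : (r⁻¹ • N) * (r⁻¹ • N) = -1 := by
      rw [hnormalize r (-1) hr.ne' (by rw [hr2]; ring), neg_one_smul]
    refine ⟨Real.arccos (τ / 2) • r⁻¹ • N, by simp [hNtr],
      (exp_smul_of_mul_self_eq_neg_one hsq _).trans ?_⟩
    rw [Real.cos_arccos (by linarith) (by linarith), Real.sin_arccos, smul_smul,
      mul_inv_cancel₀ hr.ne', one_smul]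
  · refine ⟨N, hNtr, (exp_of_mul_self_eq_zero ?_).trans ?_⟩
    · rw [hNN]; norm_num
    · norm_num
  · set r := √((τ / 2) ^ 2 - 1)
    have hr : 0 < r := Real.sqrt_pos.2 (by nlinarith)
    have hr2 : r ^ 2 = (τ / 2) ^ 2 - 1 := Real.sq_sqrt (by nlinarith)
    have hsq : (r⁻¹ • N) * (r⁻¹ • N) = 1 := by
      rw [hnormalize r 1 hr.ne' (by rw [hr2]; ring), one_smul]
    refine ⟨Real.arsinh r • r⁻¹ • N, by simp [hNtr],
      (exp_smul_of_mul_self_eq_one hsq _).trans ?_⟩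
    rw [Real.cosh_arsinh, Real.sinh_arsinh, smul_smul, mul_inv_cancel₀ hr.ne', one_smul, hr2,
      add_sub_cancel, Real.sqrt_sq (by linarith)]

end Matrix

/-- Every element of `Sp(1) = SL(2,ℝ)` is, up to sign, conjugate within `SL(2,ℝ)` to the
exponential of a traceless real `2×2` matrix: `A = ε·T⁻¹·exp(Y)·T` with `det T = 1`,
`trace Y = 0` and `ε ∈ {1, -1}`. -/
theorem sl2_eq_sign_conj_exp_traceless
    (A : Matrix (Fin 2) (Fin 2) ℝ) (hA : A.det = 1) :
    ∃ (T Y : Matrix (Fin 2) (Fin 2) ℝ) (ε : ℝ),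
      (ε = 1 ∨ ε = -1) ∧ T.det = 1 ∧ Y.trace = 0 ∧
      A = ε • (T⁻¹ * NormedSpace.exp Y * T) := by
  obtain ⟨ε, hε, htr⟩ : ∃ ε : ℝ, (ε = 1 ∨ ε = -1) ∧ -2 < (ε • A).trace := by
    by_cases h : -2 < A.trace
    · exact ⟨1, .inl rfl, by rwa [one_smul]⟩
    · exact ⟨-1, .inr rfl, by rw [neg_one_smul, trace_neg]; linarith⟩
  have hεε : ε * ε = 1 := by rcases hε with rfl | rfl <;> norm_num
  have hdet : (ε • A).det = 1 := by
    rw [det_smul, hA, Fintype.card_fin, mul_one, sq, hεε]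
  obtain ⟨Y, hY, hexp⟩ := exists_trace_eq_zero_exp_eq hdet htr
  refine ⟨1, Y, ε, hε, det_one, hY, ?_⟩
  rw [inv_one, one_mul, mul_one, hexp, smul_smul, hεε, one_smul]
end

section
/- For every real number c and every integer k ≥ 1 there exists a smooth function b:ℝ→ℝ such that b(t+1) = b(t) − 2πk for all t ∈ ℝ, b'(t) < 0 for all t ∈ ℝ, and b'(t) + c·sin(2b(t)) < 0 for all t ∈ ℝ. -/
open Real

private lemma cos_two_arctan' (x : ℝ) :
    Real.cos (2 * Real.arctan x) = (1 - x^2) / (1 + x^2) := by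
  have h1 : (0:ℝ) < 1 + x^2 := by positivity
  have h2 : Real.sqrt (1+x^2)^2 = 1+x^2 := Real.sq_sqrt h1.le
  rw [Real.cos_two_mul, Real.cos_arctan, div_pow, one_pow, h2]
  field_simp; ring

private lemma sin_two_arctan' (x : ℝ) :
    Real.sin (2 * Real.arctan x) = 2*x / (1 + x^2) := by
  have h1 : (0:ℝ) < 1 + x^2 := by positivity
  have h0 : Real.sqrt (1+x^2) ≠ 0 := by positivity
  have h2 : Real.sqrt (1+x^2)^2 = 1+x^2 := Real.sq_sqrt h1.le
  rw [Real.sin_two_mul, Real.sin_arctan, Real.cos_arctan]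
  field_simp
  rw [h2]

set_option maxHeartbeats 2000000 in
private lemma main_identity' (A D c s co N M : ℝ) (hA : 0 < A) (hD : 0 < D)
    (hA2 : A^2 = D^2+c^2) (hpy : s^2+co^2 = 1)
    (hNt : N = c^2*s - c*D*co) (hMt : M = A*(A+D) + c^2*co + c*D*s) (hMpos : 0 < M) :
    -(D * 1) +
      1 / ((M ^ 2 + N ^ 2) / M ^ 2) *
        (((c ^ 2 * (co * (2 * D)) - c * D * (-s * (2 * D))) * M -
            N * (c ^ 2 * (-s * (2 * D)) + c * D * (co * (2 * D)))) /
          M ^ 2) =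
    -A -
      c *
        (2 * (N / M) / ((M ^ 2 + N ^ 2) / M ^ 2) * (D / A * co + -c / A * s) +
          (1 - (N / M) ^ 2) / ((M ^ 2 + N ^ 2) / M ^ 2) * (-c / A * co - D / A * s)) := by
  have hQ : 0 < M^2 + N^2 := by positivity
  have hX : (c ^ 2 * (co * (2 * D)) - c * D * (-s * (2 * D))) * M -
      N * (c ^ 2 * (-s * (2 * D)) + c * D * (co * (2 * D)))
      = 2*D*((M^2+N^2) - A*(A+D)*M) := by
    rw [hNt, hMt]; ring
  have h2 : 2 * (N / M) / ((M ^ 2 + N ^ 2) / M ^ 2) * (D / A * co + -c / A * s) +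
      (1 - (N / M) ^ 2) / ((M ^ 2 + N ^ 2) / M ^ 2) * (-c / A * co - D / A * s)
      = (2*N*M*(D*co - c*s) - (M^2-N^2)*(c*co + D*s))/(A*(M^2+N^2)) := by
    have hM0 : M ≠ 0 := hMpos.ne'
    have hA0 : A ≠ 0 := hA.ne'
    have hQ0 : M^2 + N^2 ≠ 0 := hQ.ne'
    field_simp
    ring
  calc -(D * 1) +
      1 / ((M ^ 2 + N ^ 2) / M ^ 2) *
        (((c ^ 2 * (co * (2 * D)) - c * D * (-s * (2 * D))) * M -
            N * (c ^ 2 * (-s * (2 * D)) + c * D * (co * (2 * D)))) /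
          M ^ 2)
      = D - 2*D*(A*(A+D))*M/(M^2+N^2) := by
        rw [hX]; field_simp; ring
    _ = -A - c*((2*N*M*(D*co - c*s) - (M^2-N^2)*(c*co + D*s))/(A*(M^2+N^2))) := by
        field_simp
        subst hNt hMt
        linear_combination ((A*(A+D) + c*(c*co + D*s))*A^2 + A*(A+D)*c^2 + c^3*(c*co + D*s))*hA2 - (A*(A+D)*c^2 + c^3*(c*co + D*s))*(c^2+D^2)*hpy
    _ = -A -
      c *
        (2 * (N / M) / ((M ^ 2 + N ^ 2) / M ^ 2) * (D / A * co + -c / A * s) +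
          (1 - (N / M) ^ 2) / ((M ^ 2 + N ^ 2) / M ^ 2) * (-c / A * co - D / A * s)) := by
        rw [h2]

/-- For every `c ∈ ℝ` and integer `k ≥ 1` there is a smooth `b : ℝ → ℝ` with
`b(t+1) = b(t) - 2πk`, `b' < 0` and `b' + c·sin(2b) < 0` everywhere. -/
theorem exists_angular_profile_case_a (c : ℝ) (k : ℤ) (hk : 1 ≤ k) :
    ∃ b : ℝ → ℝ, ContDiff ℝ (⊤ : ℕ∞) b ∧
      (∀ t : ℝ, b (t + 1) = b t - 2 * π * (k : ℝ)) ∧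
      (∀ t : ℝ, deriv b t < 0) ∧
      (∀ t : ℝ, deriv b t + c * Real.sin (2 * b t) < 0) := by
  have hπ := Real.pi_pos
  have hk1 : (1:ℝ) ≤ (k:ℝ) := by exact_mod_cast hk
  set D : ℝ := 2 * π * (k:ℝ) with hDdef
  have hD : 0 < D := by nlinarith
  set A : ℝ := Real.sqrt (D^2 + c^2) with hAdef
  have hA2 : A^2 = D^2 + c^2 := Real.sq_sqrt (by positivity)
  have hA : 0 < A := Real.sqrt_pos.mpr (by positivity)
  have hcA : c^2 < A^2 := by rw [hA2]; nlinarith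
  have hAD : 0 < A + D := by linarith
  set Nf : ℝ → ℝ := fun t => c^2 * Real.sin (2*D*t) - c*D * Real.cos (2*D*t) with hNf
  set Mf : ℝ → ℝ := fun t => A*(A+D) + c^2 * Real.cos (2*D*t) + c*D * Real.sin (2*D*t) with hMf
  set b0 : ℝ := Real.arctan (-c/(A+D)) with hb0
  set b : ℝ → ℝ := fun t => -(D*t) + Real.arctan (Nf t / Mf t) + b0 with hbdef
  have hM : ∀ t, 0 < Mf t := by
    intro t
    have hs1 : -1 ≤ Real.sin (2*D*t) := Real.neg_one_le_sin _
    have hs2 : Real.sin (2*D*t) ≤ 1 := Real.sin_le_one _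
    have hc1 : -1 ≤ Real.cos (2*D*t) := Real.neg_one_le_cos _
    have haux : 0 ≤ A + c * Real.sin (2*D*t) := by
      by_contra h
      push_neg at h
      have h4 : 0 < A - c*Real.sin (2*D*t) := by linarith
      have hss : c^2*(Real.sin (2*D*t))^2 ≤ c^2 := by
        nlinarith [sq_nonneg c, mul_nonneg (by linarith : (0:ℝ) ≤ 1-Real.sin (2*D*t))
          (by linarith : (0:ℝ) ≤ 1+Real.sin (2*D*t))]
      nlinarith [mul_pos (by linarith : (0:ℝ) < -(A + c*Real.sin (2*D*t))) h4]
    simp only [hMf]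
    nlinarith [sq_nonneg c, mul_nonneg hD.le haux]
  have hkey1 : 1 + (-c/(A+D))^2 = 2*A/(A+D) := by
    field_simp
    linear_combination (-1)*hA2
  have hkey2 : 1 - (-c/(A+D))^2 = 2*D/(A+D) := by
    field_simp
    linear_combination hA2
  have hsb0 : Real.sin (2*b0) = -c/A := by
    rw [hb0, sin_two_arctan', hkey1]
    field_simp
  have hcb0 : Real.cos (2*b0) = D/A := by
    rw [hb0, cos_two_arctan', hkey2, hkey1]
    field_simp
  have hNc : ContDiff ℝ (⊤ : ℕ∞) Nf := by
    apply ContDiff.sub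
    · exact contDiff_const.mul (Real.contDiff_sin.comp (contDiff_const.mul contDiff_id))
    · exact contDiff_const.mul (Real.contDiff_cos.comp (contDiff_const.mul contDiff_id))
  have hMc : ContDiff ℝ (⊤ : ℕ∞) Mf := by
    apply ContDiff.add
    apply ContDiff.add contDiff_const
    · exact contDiff_const.mul (Real.contDiff_cos.comp (contDiff_const.mul contDiff_id))
    · exact contDiff_const.mul (Real.contDiff_sin.comp (contDiff_const.mul contDiff_id))
  have hbc : ContDiff ℝ (⊤ : ℕ∞) b := by
    apply ContDiff.add
    apply ContDiff.add
    · exact (contDiff_const.mul contDiff_id).neg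
    · exact Real.contDiff_arctan.comp (hNc.div hMc fun t => (hM t).ne')
    · exact contDiff_const
  have hbderiv : ∀ t, deriv b t = -A - c * Real.sin (2 * b t) := by
    intro t
    have hlin : HasDerivAt (fun u : ℝ => 2*D*u) (2*D) t := by
      simpa using (hasDerivAt_id t).const_mul (2*D)
    have hsin : HasDerivAt (fun u => Real.sin (2*D*u)) (Real.cos (2*D*t) * (2*D)) t :=
      (Real.hasDerivAt_sin _).comp t hlin
    have hcos : HasDerivAt (fun u => Real.cos (2*D*u)) (-Real.sin (2*D*t) * (2*D)) t :=
      (Real.hasDerivAt_cos _).comp t hlin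
    have hNd : HasDerivAt Nf
        (c^2*(Real.cos (2*D*t) * (2*D)) - c*D*(-Real.sin (2*D*t) * (2*D))) t :=
      (hsin.const_mul (c^2)).sub (hcos.const_mul (c*D))
    have hMd : HasDerivAt Mf
        (c^2*(-Real.sin (2*D*t) * (2*D)) + c*D*(Real.cos (2*D*t) * (2*D))) t := by
      have h := (((hasDerivAt_const t (A*(A+D))).add (hcos.const_mul (c^2))).add
        (hsin.const_mul (c*D)))
      rw [zero_add] at h
      exact h
    have hx : HasDerivAt (fun u => Nf u / Mf u)
        (((c^2*(Real.cos (2*D*t) * (2*D)) - c*D*(-Real.sin (2*D*t) * (2*D))) * Mf t -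
          Nf t * (c^2*(-Real.sin (2*D*t) * (2*D)) + c*D*(Real.cos (2*D*t) * (2*D)))) /
            (Mf t)^2) t :=
      hNd.div hMd (hM t).ne'
    have harc : HasDerivAt (fun u => Real.arctan (Nf u / Mf u))
        ((1/(1+(Nf t/Mf t)^2)) *
          (((c^2*(Real.cos (2*D*t) * (2*D)) - c*D*(-Real.sin (2*D*t) * (2*D))) * Mf t -
          Nf t * (c^2*(-Real.sin (2*D*t) * (2*D)) + c*D*(Real.cos (2*D*t) * (2*D)))) /
            (Mf t)^2)) t :=
      (Real.hasDerivAt_arctan _).comp t hx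
    have hbt : HasDerivAt b (-(D*1) + (1/(1+(Nf t/Mf t)^2)) *
        (((c^2*(Real.cos (2*D*t) * (2*D)) - c*D*(-Real.sin (2*D*t) * (2*D))) * Mf t -
          Nf t * (c^2*(-Real.sin (2*D*t) * (2*D)) + c*D*(Real.cos (2*D*t) * (2*D)))) /
            (Mf t)^2)) t :=
      ((((hasDerivAt_id t).const_mul D).neg).add harc).add_const b0
    rw [hbt.deriv]
    have h2b : 2 * b t = 2*Real.arctan (Nf t/Mf t) + (2*b0 - 2*D*t) := by
      simp only [hbdef]; ring
    rw [h2b, Real.sin_add, Real.sin_sub, Real.cos_sub, hsb0, hcb0, sin_two_arctan',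
      cos_two_arctan']
    have hNt : Nf t = c^2 * Real.sin (2*D*t) - c*D * Real.cos (2*D*t) := rfl
    have hMt : Mf t = A*(A+D) + c^2 * Real.cos (2*D*t) + c*D * Real.sin (2*D*t) := rfl
    have hpy : (Real.sin (2*D*t))^2 + (Real.cos (2*D*t))^2 = 1 := Real.sin_sq_add_cos_sq _
    set s : ℝ := Real.sin (2*D*t)
    set co : ℝ := Real.cos (2*D*t)
    set N : ℝ := Nf t
    set M : ℝ := Mf t
    have hMpos : 0 < M := hM t
    have h1x : 1 + (N/M)^2 = (M^2+N^2)/M^2 := by field_simp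
    rw [h1x]
    exact main_identity' A D c s co N M hA hD hA2 hpy hNt hMt hMpos
  refine ⟨b, hbc, ?_, ?_, ?_⟩
  · intro t
    have h1 : 2*D*(t+1) = 2*D*t + (2*k:ℤ) * (2*π) := by push_cast; rw [hDdef]; ring
    have hNper : Nf (t+1) = Nf t := by
      simp only [hNf, h1, Real.sin_add_int_mul_two_pi, Real.cos_add_int_mul_two_pi]
    have hMper : Mf (t+1) = Mf t := by
      simp only [hMf, h1, Real.sin_add_int_mul_two_pi, Real.cos_add_int_mul_two_pi]
    simp only [hbdef, hNper, hMper, hDdef]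
    ring
  · intro t
    rw [hbderiv t]
    have hs1 : (Real.sin (2*b t))^2 ≤ 1 := Real.sin_sq_le_one _
    nlinarith [sq_nonneg (c * Real.sin (2*b t) + A)]
  · intro t
    rw [hbderiv t]
    linarith
end

section
/- For every real number a > 0 and every integer k ≥ 0 there exists a smooth function β:[0,1]→ℝ with β(0) = 0, β(1) = −2π(k+1), β'(t) < 0 for all t ∈ [0,1], and β'(t) + a·sin²(β(t)) < 0 for all t ∈ [0,1]. -/
open Real Set

private lemma profile_hasDerivAt (c L t : ℝ) (hc0 : 0 < c) (hc1 : c ≤ 1/2) :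
    HasDerivAt (fun t : ℝ => -(L*t - Real.arctan ((1-c)*Real.sin (L*t)*Real.cos (L*t)
        / (Real.cos (L*t)^2 + c*Real.sin (L*t)^2))))
      (-(L*c/(1 - Real.sin (L*t)^2 + c^2*Real.sin (L*t)^2))) t := by
  have hpy := Real.sin_sq_add_cos_sq (L*t)
  have hD : Real.cos (L*t)^2 + c*Real.sin (L*t)^2 ≠ 0 := by
    nlinarith [sq_nonneg (Real.sin (L*t)), sq_nonneg (Real.cos (L*t))]
  have h1 : HasDerivAt (fun t : ℝ => L*t) L t := by
    simpa using (hasDerivAt_id t).const_mul L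
  have hsin : HasDerivAt (fun t : ℝ => Real.sin (L*t)) (Real.cos (L*t) * L) t :=
    (Real.hasDerivAt_sin (L*t)).comp t h1
  have hcos : HasDerivAt (fun t : ℝ => Real.cos (L*t)) (-Real.sin (L*t) * L) t :=
    (Real.hasDerivAt_cos (L*t)).comp t h1
  have hnum : HasDerivAt (fun t : ℝ => (1-c)*Real.sin (L*t)*Real.cos (L*t)) _ t :=
    (hsin.const_mul (1-c)).mul hcos
  have hden : HasDerivAt (fun t : ℝ => Real.cos (L*t)^2 + c*Real.sin (L*t)^2) _ t :=
    (hcos.pow 2).add ((hsin.pow 2).const_mul c)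
  have hu : HasDerivAt (fun t : ℝ => (1-c)*Real.sin (L*t)*Real.cos (L*t)
      / (Real.cos (L*t)^2 + c*Real.sin (L*t)^2)) _ t := hnum.div hden hD
  have harc := (Real.hasDerivAt_arctan _).comp t hu
  have hb := (h1.sub harc).neg
  refine HasDerivAt.congr_deriv hb ?_
  symm
  set p := Real.sin (L*t) with hp
  set q := Real.cos (L*t) with hq
  have hE : 1 - p ^ 2 + c ^ 2 * p ^ 2 ≠ 0 := by
    nlinarith [sq_nonneg p, sq_nonneg q, sq_nonneg (c*p)]
  have hu2 : 1 + ((1 - c) * p * q / (q ^ 2 + c * p ^ 2)) ^ 2 ≠ 0 := by positivity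
  rw [hp, hq] at hD
  have hD' : q ^ 2 + c * p ^ 2 ≠ 0 := hD
  field_simp
  linear_combination (-(L*c*p^2*q^2) - L*c*p^4 + L*c^3*p^2*q^2 + L*c^3*p^4) * hpy

private lemma profile_sin_sq (c L t : ℝ) (hc0 : 0 < c) (hc1 : c ≤ 1/2) :
    Real.sin (-(L*t - Real.arctan ((1-c)*Real.sin (L*t)*Real.cos (L*t)
        / (Real.cos (L*t)^2 + c*Real.sin (L*t)^2)))) ^ 2
      = c^2*Real.sin (L*t)^2/(1 - Real.sin (L*t)^2 + c^2*Real.sin (L*t)^2) := by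
  have hpy := Real.sin_sq_add_cos_sq (L*t)
  have hD : Real.cos (L*t)^2 + c*Real.sin (L*t)^2 ≠ 0 := by
    nlinarith [sq_nonneg (Real.sin (L*t)), sq_nonneg (Real.cos (L*t))]
  set U := (1-c)*Real.sin (L*t)*Real.cos (L*t) / (Real.cos (L*t)^2 + c*Real.sin (L*t)^2) with hU
  have hsq : Real.sqrt (1+U^2) ^ 2 = 1 + U^2 := Real.sq_sqrt (by positivity)
  have hsne : Real.sqrt (1+U^2) ≠ 0 := by positivity
  rw [show -(L*t - Real.arctan U) = Real.arctan U - L*t by ring, Real.sin_sub,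
    Real.sin_arctan, Real.cos_arctan]
  rw [div_mul_eq_mul_div, one_div, inv_mul_eq_div, div_sub_div_same, div_pow, hsq]
  rw [hU]
  set p := Real.sin (L*t) with hp
  set q := Real.cos (L*t) with hq
  have hE : 1 - p ^ 2 + c ^ 2 * p ^ 2 ≠ 0 := by
    nlinarith [sq_nonneg p, sq_nonneg q, sq_nonneg (c*p)]
  have hu2 : 1 + ((1 - c) * p * q / (q ^ 2 + c * p ^ 2)) ^ 2 ≠ 0 := by positivity
  rw [hp, hq] at hD
  have hD' : q ^ 2 + c * p ^ 2 ≠ 0 := hD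
  field_simp
  linear_combination (-(p^4*q^2*c^2) + p^4*q^2*c^4 - p^6*c^2 + p^6*c^4) * hpy

/-- For every `a > 0` and integer `k ≥ 0` there is a smooth `β : [0,1] → ℝ` with
`β(0) = 0`, `β(1) = -2π(k+1)`, `β' < 0` and `β' + a·sin²(β) < 0` on `[0,1]`. -/
theorem exists_angular_profile_case_b (a : ℝ) (ha : 0 < a) (k : ℕ) :
    ∃ β : ℝ → ℝ, ContDiffOn ℝ (⊤ : ℕ∞) β (Icc (0:ℝ) 1) ∧
      β 0 = 0 ∧ β 1 = -(2 * π * ((k : ℝ) + 1)) ∧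
      (∀ t ∈ Icc (0:ℝ) 1, derivWithin β (Icc (0:ℝ) 1) t < 0) ∧
      (∀ t ∈ Icc (0:ℝ) 1,
        derivWithin β (Icc (0:ℝ) 1) t + a * Real.sin (β t) ^ 2 < 0) := by
  have hπ := Real.pi_pos
  set L : ℝ := 2 * π * ((k : ℝ) + 1) with hLdef
  have hL0 : 0 < L := by positivity
  set c : ℝ := min (1/2) (L/(2*a)) with hcdef
  have hc0 : 0 < c := lt_min (by norm_num) (by positivity)
  have hc1 : c ≤ 1/2 := min_le_left _ _
  have hca : a * c ≤ L/2 := by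
    have h1 : c ≤ L/(2*a) := min_le_right _ _
    calc a * c ≤ a * (L/(2*a)) := by nlinarith
      _ = L/2 := by field_simp
  set β : ℝ → ℝ := fun t => -(L*t - Real.arctan ((1-c)*Real.sin (L*t)*Real.cos (L*t)
      / (Real.cos (L*t)^2 + c*Real.sin (L*t)^2))) with hβdef
  have hDpos : ∀ s : ℝ, 0 < Real.cos s^2 + c*Real.sin s^2 := fun s => by
    nlinarith [Real.sin_sq_add_cos_sq s, sq_nonneg (Real.sin s), sq_nonneg (Real.cos s)]
  have hEpos : ∀ s : ℝ, 0 < 1 - Real.sin s^2 + c^2*Real.sin s^2 := fun s => by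
    nlinarith [Real.sin_sq_add_cos_sq s, sq_nonneg (Real.cos s), sq_nonneg (c*Real.sin s),
      sq_nonneg (c*Real.cos s)]
  have hd : ∀ t : ℝ, HasDerivAt β (-(L*c/(1 - Real.sin (L*t)^2 + c^2*Real.sin (L*t)^2))) t :=
    fun t => profile_hasDerivAt c L t hc0 hc1
  have hdw : ∀ t ∈ Icc (0:ℝ) 1, derivWithin β (Icc (0:ℝ) 1) t
      = -(L*c/(1 - Real.sin (L*t)^2 + c^2*Real.sin (L*t)^2)) := fun t ht =>
    (hd t).hasDerivWithinAt.derivWithin (uniqueDiffOn_Icc (by norm_num) t ht)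
  refine ⟨β, ?_, ?_, ?_, ?_, ?_⟩
  · -- smoothness
    have h0 : ContDiff ℝ (⊤ : ℕ∞) fun t : ℝ => L * t := contDiff_const.mul contDiff_id
    have hs : ContDiff ℝ (⊤ : ℕ∞) fun t : ℝ => Real.sin (L*t) := Real.contDiff_sin.comp h0
    have hc' : ContDiff ℝ (⊤ : ℕ∞) fun t : ℝ => Real.cos (L*t) := Real.contDiff_cos.comp h0
    have hden : ContDiff ℝ (⊤ : ℕ∞) fun t : ℝ => Real.cos (L*t)^2 + c*Real.sin (L*t)^2 :=
      (hc'.pow 2).add (contDiff_const.mul (hs.pow 2))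
    have hu : ContDiff ℝ (⊤ : ℕ∞) fun t : ℝ => (1-c)*Real.sin (L*t)*Real.cos (L*t)
        / (Real.cos (L*t)^2 + c*Real.sin (L*t)^2) :=
      (((contDiff_const.mul hs).mul hc').div hden fun t => (hDpos (L*t)).ne')
    exact ((h0.sub (Real.contDiff_arctan.comp hu)).neg).contDiffOn
  · -- β 0 = 0
    simp [hβdef]
  · -- β 1 = -L
    have hsinL : Real.sin L = 0 := by
      rw [hLdef, show 2 * π * ((k:ℝ) + 1) = ((2*(k+1) : ℕ) : ℝ) * π by push_cast; ring,
        Real.sin_nat_mul_pi]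
    simp [hβdef, hsinL]
  · intro t ht
    rw [hdw t ht]
    have := hEpos (L*t)
    have : 0 < L*c/(1 - Real.sin (L*t)^2 + c^2*Real.sin (L*t)^2) :=
      div_pos (mul_pos hL0 hc0) this
    linarith
  · intro t ht
    rw [hdw t ht]
    have hsq := profile_sin_sq c L t hc0 hc1
    rw [hβdef]
    simp only []
    rw [hsq]
    have hE := hEpos (L*t)
    have heq : -(L*c/(1 - Real.sin (L*t)^2 + c^2*Real.sin (L*t)^2))
        + a * (c^2*Real.sin (L*t)^2/(1 - Real.sin (L*t)^2 + c^2*Real.sin (L*t)^2))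
        = (a*c^2*Real.sin (L*t)^2 - L*c) / (1 - Real.sin (L*t)^2 + c^2*Real.sin (L*t)^2) := by
      field_simp; ring
    rw [heq]
    apply div_neg_of_neg_of_pos _ hE
    have hp1 : Real.sin (L*t)^2 ≤ 1 := by
      nlinarith [Real.sin_sq_add_cos_sq (L*t), sq_nonneg (Real.cos (L*t))]
    have h2 : a*c^2*Real.sin (L*t)^2 ≤ a*c*c := by nlinarith [mul_nonneg (mul_nonneg ha.le (mul_nonneg hc0.le hc0.le)) (sub_nonneg.mpr hp1)]
    have h3 : a*c*c ≤ (L/2)*c := mul_le_mul_of_nonneg_right hca hc0.le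
    have h4 : (L/2)*c = L*c/2 := by ring
    have h5 : 0 < L*c := mul_pos hL0 hc0
    linarith
end
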